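/- arXiv:1804.06191 — 7 statements merged into one kernel-verified Lean document; each statement's English description precedes it below -/
import Mathlib

section
/- For Hermitian operators X, Y of size d, the minimum over all density matrices ρ of Δ²X_ρ + Δ²Y_ρ equals the minimum over real x, y of the smallest eigenvalue of the operator X² + Y² − 2(xX + yY) + (x² + y²)·𝟙. -/
open Matrix
open scoped ComplexOrder

/-- Expectation value ⟨A⟩_ρ = Tr(ρA) (real part). -/
noncomputable def expval {d : ℕ} (ρ A : Matrix (Fin d) (Fin d) ℂ) : ℝ :=
  ((ρ * A).trace).re

/-- Variance Δ²A_ρ = ⟨A²⟩_ρ − ⟨A⟩_ρ². -/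
noncomputable def variance {d : ℕ} (ρ A : Matrix (Fin d) (Fin d) ℂ) : ℝ :=
  expval ρ (A * A) - (expval ρ A) ^ 2

/-- Density matrix: positive semidefinite with unit trace. -/
def IsDensity {d : ℕ} (ρ : Matrix (Fin d) (Fin d) ℂ) : Prop :=
  ρ.PosSemidef ∧ ρ.trace = 1

/-- Minimal eigenvalue of a Hermitian matrix. -/
noncomputable def lamMin {d : ℕ} {A : Matrix (Fin d) (Fin d) ℂ}
    (hA : A.IsHermitian) : ℝ :=
  ⨅ i, hA.eigenvalues i

/-! ### Auxiliary lemmas -/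

lemma expval_add {d : ℕ} (ρ A B : Matrix (Fin d) (Fin d) ℂ) :
    expval ρ (A + B) = expval ρ A + expval ρ B := by
  simp [expval, mul_add]

lemma expval_sub {d : ℕ} (ρ A B : Matrix (Fin d) (Fin d) ℂ) :
    expval ρ (A - B) = expval ρ A - expval ρ B := by
  simp [expval, mul_sub]

lemma expval_smul {d : ℕ} (ρ A : Matrix (Fin d) (Fin d) ℂ) (r : ℝ) :
    expval ρ (r • A) = r * expval ρ A := by
  simp [expval, Matrix.mul_smul, Complex.real_smul]

lemma expval_one {d : ℕ} {ρ : Matrix (Fin d) (Fin d) ℂ} (h : ρ.trace = 1) :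
    expval ρ 1 = 1 := by
  simp [expval, h]

/-- The key algebraic identity for the sum of variances. -/
lemma variance_identity {d : ℕ} (ρ X Y : Matrix (Fin d) (Fin d) ℂ)
    (hρt : ρ.trace = 1) (x y : ℝ) :
    variance ρ X + variance ρ Y
      = expval ρ (X * X + Y * Y - (2 * x : ℝ) • X - (2 * y : ℝ) • Y
          + (x ^ 2 + y ^ 2 : ℝ) • 1)
        - (x - expval ρ X) ^ 2 - (y - expval ρ Y) ^ 2 := by
  rw [expval_add, expval_sub, expval_sub, expval_add, expval_smul, expval_smul,
    expval_smul, expval_one hρt]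
  unfold variance
  ring

/-- The shifted operator is positive semidefinite. -/
lemma opM_posSemidef {d : ℕ} {X Y : Matrix (Fin d) (Fin d) ℂ}
    (hX : X.IsHermitian) (hY : Y.IsHermitian) (x y : ℝ) :
    (X * X + Y * Y - (2 * x : ℝ) • X - (2 * y : ℝ) • Y
      + (x ^ 2 + y ^ 2 : ℝ) • 1).PosSemidef := by
  have hs : ∀ (r : ℝ) (M : Matrix (Fin d) (Fin d) ℂ), r • M = (r:ℂ) • M := fun r M => by
    ext i j; simp [Complex.real_smul]
  have hA : (X - (x:ℂ)•1)ᴴ = X - (x:ℂ)•1 := by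
    rw [conjTranspose_sub, hX.eq, conjTranspose_smul]; simp
  have hB : (Y - (y:ℂ)•1)ᴴ = Y - (y:ℂ)•1 := by
    rw [conjTranspose_sub, hY.eq, conjTranspose_smul]; simp
  have key : X * X + Y * Y - (2 * x : ℝ) • X - (2 * y : ℝ) • Y + (x ^ 2 + y ^ 2 : ℝ) • 1
      = (X - (x:ℂ)•1)ᴴ * (X - (x:ℂ)•1) + (Y - (y:ℂ)•1)ᴴ * (Y - (y:ℂ)•1) := by
    rw [hA, hB, hs, hs, hs]
    simp only [sub_mul, mul_sub, Matrix.smul_mul, Matrix.mul_smul, mul_one, one_mul, smul_smul]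
    push_cast
    module
  rw [key]
  exact (posSemidef_conjTranspose_mul_self _).add (posSemidef_conjTranspose_mul_self _)

/-- Expectation of a Hermitian operator against a density matrix is at least
its minimal eigenvalue. -/
lemma lamMin_le_expval {d : ℕ} (hd : 0 < d) {M ρ : Matrix (Fin d) (Fin d) ℂ}
    (hM : M.IsHermitian) (hρ : IsDensity ρ) : lamMin hM ≤ expval ρ M := by
  haveI : Nonempty (Fin d) := ⟨⟨0, hd⟩⟩
  set V : Matrix (Fin d) (Fin d) ℂ := (hM.eigenvectorUnitary : Matrix (Fin d) (Fin d) ℂ) with hV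
  set σ : Matrix (Fin d) (Fin d) ℂ := Vᴴ * ρ * V with hσdef
  have hσ : σ.PosSemidef := hρ.1.conjTranspose_mul_mul_same V
  have hVV : V * Vᴴ = 1 := by
    have := (Matrix.mem_unitaryGroup_iff).mp hM.eigenvectorUnitary.2
    simpa [Matrix.star_eq_conjTranspose] using this
  have htrσ : σ.trace = 1 := by
    rw [hσdef, Matrix.trace_mul_cycle, hVV, one_mul, hρ.2]
  have hdiag : ∀ i, 0 ≤ σ i i := by
    intro i
    have := hσ.dotProduct_mulVec_nonneg (Pi.single i 1)
    simpa [Matrix.mulVec_single, dotProduct, Pi.single_apply, Finset.sum_ite_eq] using this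
  have hre : ∀ i, 0 ≤ (σ i i).re := fun i => (Complex.le_def.mp (hdiag i)).1
  have hsum : ∑ i, (σ i i).re = 1 := by
    have := congrArg Complex.re htrσ
    simpa [Matrix.trace, Matrix.diag, Complex.re_sum] using this
  have key : expval ρ M = ∑ i, hM.eigenvalues i * (σ i i).re := by
    have h1 : (ρ * M).trace = (σ * diagonal (RCLike.ofReal ∘ hM.eigenvalues)).trace := by
      conv_lhs => rw [hM.spectral_theorem, Unitary.conjStarAlgAut_apply, ← hV]
      rw [hσdef]
      rw [show ρ * (V * diagonal (RCLike.ofReal ∘ hM.eigenvalues) * star V)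
          = (ρ * V * diagonal (RCLike.ofReal ∘ hM.eigenvalues)) * Vᴴ by
        simp [Matrix.star_eq_conjTranspose, mul_assoc]]
      rw [Matrix.trace_mul_comm]
      rw [← mul_assoc, ← mul_assoc]
    rw [expval, h1]
    simp [Matrix.trace, Matrix.diag, Matrix.mul_diagonal, Complex.re_sum, mul_comm]
  rw [key]
  calc lamMin hM = ∑ i, lamMin hM * (σ i i).re := by
        rw [← Finset.mul_sum, hsum, mul_one]
    _ ≤ ∑ i, hM.eigenvalues i * (σ i i).re := by
        apply Finset.sum_le_sum
        intro i _
        exact mul_le_mul_of_nonneg_right (ciInf_le (Set.finite_range _).bddBelow i) (hre i)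

/-- There is a density matrix (a pure eigenstate) achieving the minimal eigenvalue. -/
lemma exists_density_expval_eq_lamMin {d : ℕ} (hd : 0 < d)
    {M : Matrix (Fin d) (Fin d) ℂ} (hM : M.IsHermitian) :
    ∃ ρ : Matrix (Fin d) (Fin d) ℂ, IsDensity ρ ∧ expval ρ M = lamMin hM := by
  haveI : Nonempty (Fin d) := ⟨⟨0, hd⟩⟩
  obtain ⟨i₀, hi₀⟩ := Finite.exists_min hM.eigenvalues
  have hmin : lamMin hM = hM.eigenvalues i₀ :=
    le_antisymm (ciInf_le (Set.finite_range _).bddBelow i₀) (le_ciInf hi₀)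
  set w : Fin d → ℂ := ⇑(hM.eigenvectorBasis i₀) with hw
  have hnorm : ∑ j, (starRingEnd ℂ) (w j) * w j = 1 := by
    have h1 : (inner ℂ (hM.eigenvectorBasis i₀) (hM.eigenvectorBasis i₀) : ℂ) = 1 := by
      rw [inner_self_eq_norm_sq_to_K, hM.eigenvectorBasis.orthonormal.1 i₀]
      norm_num
    rw [← h1, PiLp.inner_apply]
    refine Finset.sum_congr rfl fun j _ => ?_
    simp [hw, RCLike.inner_apply, mul_comm, Complex.mul_conj']
  refine ⟨vecMulVec w (star w), ⟨.of_dotProduct_mulVec_nonneg ?_ ?_, ?_⟩, ?_⟩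
  · ext i j
    simp [conjTranspose_apply, vecMulVec_apply, mul_comm]
  · intro z
    have hform : star z ⬝ᵥ (vecMulVec w (star w)) *ᵥ z
        = star (star w ⬝ᵥ z) * (star w ⬝ᵥ z) := by
      simp only [dotProduct, Matrix.mulVec, vecMulVec_apply, Pi.star_apply,
        Finset.mul_sum, Finset.sum_mul, star_sum, star_mul', star_star]
      rw [Finset.sum_comm]
      apply Finset.sum_congr rfl
      intro i _
      apply Finset.sum_congr rfl
      intro j _
      ring
    rw [hform]
    exact star_mul_self_nonneg _
  · have : (vecMulVec w (star w)).trace = ∑ j, (starRingEnd ℂ) (w j) * w j := by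
      simp [Matrix.trace, Matrix.diag, vecMulVec_apply, mul_comm, Complex.star_def]
    rw [this, hnorm]
  · have htr : (vecMulVec w (star w) * M).trace = star w ⬝ᵥ (M *ᵥ w) := by
      simp only [Matrix.trace, Matrix.diag, Matrix.mul_apply, vecMulVec_apply,
        dotProduct, Matrix.mulVec, Pi.star_apply, Finset.mul_sum]
      rw [Finset.sum_comm]
      apply Finset.sum_congr rfl
      intro i _
      apply Finset.sum_congr rfl
      intro j _
      ring
    have heig : M *ᵥ w = (hM.eigenvalues i₀ : ℂ) • w := by
      rw [hw, hM.mulVec_eigenvectorBasis]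
      ext j
      simp [Complex.real_smul]
    rw [expval, htr, heig]
    have h2 : star w ⬝ᵥ ((hM.eigenvalues i₀ : ℂ) • w) = (hM.eigenvalues i₀ : ℂ) := by
      rw [dotProduct_smul]
      have h3 : star w ⬝ᵥ w = 1 := by
        simpa [dotProduct, Complex.star_def] using hnorm
      rw [h3]
      simp
    rw [h2, hmin]
    simp

theorem min_sum_variance_eq_min_lamMin {d : ℕ} (hd : 0 < d)
    (X Y : Matrix (Fin d) (Fin d) ℂ)
    (hX : X.IsHermitian) (hY : Y.IsHermitian)
    (hop : ∀ x y : ℝ,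
      (X * X + Y * Y - (2 * x : ℝ) • X - (2 * y : ℝ) • Y
        + (x ^ 2 + y ^ 2 : ℝ) • 1).IsHermitian) :
    (⨅ ρ : {ρ : Matrix (Fin d) (Fin d) ℂ // IsDensity ρ},
        variance ρ.1 X + variance ρ.1 Y) =
      ⨅ p : ℝ × ℝ, lamMin (hop p.1 p.2) := by
  haveI : Nonempty (Fin d) := ⟨⟨0, hd⟩⟩
  -- nonnegativity of all the minimal eigenvalues
  have hlam_nonneg : ∀ x y : ℝ, 0 ≤ lamMin (hop x y) := by
    intro x y
    exact le_ciInf fun i => (opM_posSemidef hX hY x y).eigenvalues_nonneg i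
  -- the density matrices form a nonempty type
  obtain ⟨ρ₀, hρ₀, _⟩ := exists_density_expval_eq_lamMin hd (hop 0 0)
  haveI : Nonempty {ρ : Matrix (Fin d) (Fin d) ℂ // IsDensity ρ} := ⟨⟨ρ₀, hρ₀⟩⟩
  -- for every density, the sum of variances dominates some lamMin
  have hvar_ge : ∀ ρ : {ρ : Matrix (Fin d) (Fin d) ℂ // IsDensity ρ},
      lamMin (hop (expval ρ.1 X) (expval ρ.1 Y)) ≤ variance ρ.1 X + variance ρ.1 Y := by
    intro ρ
    rw [variance_identity ρ.1 X Y ρ.2.2 (expval ρ.1 X) (expval ρ.1 Y)]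
    simp only [sub_self, ne_eq, OfNat.ofNat_ne_zero, not_false_eq_true, zero_pow, sub_zero]
    exact lamMin_le_expval hd (hop _ _) ρ.2
  -- boundedness below of the variance family
  have hbdd_var : BddBelow (Set.range fun ρ : {ρ : Matrix (Fin d) (Fin d) ℂ // IsDensity ρ} =>
      variance ρ.1 X + variance ρ.1 Y) := by
    refine ⟨0, ?_⟩
    rintro v ⟨ρ, rfl⟩
    exact le_trans (hlam_nonneg _ _) (hvar_ge ρ)
  have hbdd_lam : BddBelow (Set.range fun p : ℝ × ℝ => lamMin (hop p.1 p.2)) := by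
    refine ⟨0, ?_⟩
    rintro v ⟨p, rfl⟩
    exact hlam_nonneg p.1 p.2
  apply le_antisymm
  · -- LHS ≤ RHS : for each (x,y) exhibit a good density
    apply le_ciInf
    intro p
    obtain ⟨ρ, hρ, hev⟩ := exists_density_expval_eq_lamMin hd (hop p.1 p.2)
    have hle : variance ρ X + variance ρ Y ≤ lamMin (hop p.1 p.2) := by
      rw [variance_identity ρ X Y hρ.2 p.1 p.2, hev]
      nlinarith [sq_nonneg (p.1 - expval ρ X), sq_nonneg (p.2 - expval ρ Y)]
    exact le_trans (ciInf_le hbdd_var ⟨ρ, hρ⟩) hle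
  · -- RHS ≤ LHS
    apply le_ciInf
    intro ρ
    exact le_trans (ciInf_le hbdd_lam (expval ρ.1 X, expval ρ.1 Y)) (hvar_ge ρ)
end

section
/- Let X, Y be Hermitian operators and let (x₁ < … < x_n), (y₁ < … < y_m) be increasing real sequences containing the spectra of X and Y respectively. Define X_i = X² − (x_i + x_{i+1})X + x_i x_{i+1}·𝟙 and Y_j = Y² − (y_j + y_{j+1})Y + y_j y_{j+1}·𝟙. Then for every density matrix ρ, Δ²X_ρ + Δ²Y_ρ ≥ min_{i,j} λ_min(X_i + Y_j). -/
open Matrix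
open scoped ComplexOrder

lemma trace_mul_psd_nonneg {d : ℕ} {ρ B : Matrix (Fin d) (Fin d) ℂ}
    (hρ : ρ.PosSemidef) (hB : B.PosSemidef) : 0 ≤ ((ρ * B).trace).re := by
  obtain ⟨C, rfl⟩ : ∃ C : Matrix (Fin d) (Fin d) ℂ, ρ = Cᴴ * C := by
    open scoped MatrixOrder in exact CStarAlgebra.nonneg_iff_eq_star_mul_self.mp hρ.nonneg
  obtain ⟨D, rfl⟩ : ∃ D : Matrix (Fin d) (Fin d) ℂ, B = Dᴴ * D := by
    open scoped MatrixOrder in exact CStarAlgebra.nonneg_iff_eq_star_mul_self.mp hB.nonneg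
  have h : (Cᴴ * C * (Dᴴ * D)).trace = ((D * Cᴴ)ᴴ * (D * Cᴴ)).trace := by
    rw [Matrix.conjTranspose_mul, Matrix.conjTranspose_conjTranspose]
    rw [Matrix.mul_assoc Cᴴ, Matrix.trace_mul_comm]
    simp only [Matrix.mul_assoc]
  rw [h, Matrix.trace, Complex.re_sum]
  refine Finset.sum_nonneg fun i _ => ?_
  rw [Matrix.diag_apply, Matrix.mul_apply, Complex.re_sum]
  refine Finset.sum_nonneg fun j _ => ?_
  rw [Matrix.conjTranspose_apply, Complex.star_def, ← Complex.normSq_eq_conj_mul_self,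
    Complex.ofReal_re]
  exact Complex.normSq_nonneg _

lemma shift_psd {d : ℕ} {A : Matrix (Fin d) (Fin d) ℂ} (hA : A.IsHermitian)
    {c : ℝ} (hc : ∀ i, c ≤ hA.eigenvalues i) : (A - c • 1).PosSemidef := by
  have hU := Matrix.mem_unitaryGroup_iff.mp (hA.eigenvectorUnitary).2
  have h1 : (c • (1 : Matrix (Fin d) (Fin d) ℂ)) =
      (hA.eigenvectorUnitary : Matrix (Fin d) (Fin d) ℂ) * (c • 1) *
        (star (hA.eigenvectorUnitary : Matrix (Fin d) (Fin d) ℂ)) := by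
    rw [Matrix.mul_smul, Matrix.smul_mul, Matrix.mul_one, hU]
  have hd : (c • (1 : Matrix (Fin d) (Fin d) ℂ)) = Matrix.diagonal (fun _ => (c : ℂ)) := by
    ext i j
    by_cases hij : i = j <;>
      simp [Matrix.one_apply, Matrix.diagonal, hij, Complex.real_smul]
  have h2 : A - c • 1 = (hA.eigenvectorUnitary : Matrix (Fin d) (Fin d) ℂ) *
      (Matrix.diagonal (fun i => ((hA.eigenvalues i - c : ℝ) : ℂ))) *
      (star (hA.eigenvectorUnitary : Matrix (Fin d) (Fin d) ℂ)) := by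
    conv_lhs => rw [hA.spectral_theorem, Unitary.conjStarAlgAut_apply, h1]
    rw [← Matrix.sub_mul, ← Matrix.mul_sub]
    congr 2
    rw [hd, Matrix.diagonal_sub]
    ext i
    push_cast
    simp
  rw [h2]
  refine Matrix.PosSemidef.mul_mul_conjTranspose_same ?_ _
  refine Matrix.posSemidef_diagonal_iff.mpr fun i => ?_
  rw [Complex.zero_le_real]
  linarith [hc i]

lemma shift_psd' {d : ℕ} {A : Matrix (Fin d) (Fin d) ℂ} (hA : A.IsHermitian)
    {c : ℝ} (hc : ∀ i, hA.eigenvalues i ≤ c) : (c • 1 - A).PosSemidef := by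
  have hU := Matrix.mem_unitaryGroup_iff.mp (hA.eigenvectorUnitary).2
  have h1 : (c • (1 : Matrix (Fin d) (Fin d) ℂ)) =
      (hA.eigenvectorUnitary : Matrix (Fin d) (Fin d) ℂ) * (c • 1) *
        (star (hA.eigenvectorUnitary : Matrix (Fin d) (Fin d) ℂ)) := by
    rw [Matrix.mul_smul, Matrix.smul_mul, Matrix.mul_one, hU]
  have hd : (c • (1 : Matrix (Fin d) (Fin d) ℂ)) = Matrix.diagonal (fun _ => (c : ℂ)) := by
    ext i j
    by_cases hij : i = j <;>
      simp [Matrix.one_apply, Matrix.diagonal, hij, Complex.real_smul]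
  have h2 : c • 1 - A = (hA.eigenvectorUnitary : Matrix (Fin d) (Fin d) ℂ) *
      (Matrix.diagonal (fun i => ((c - hA.eigenvalues i : ℝ) : ℂ))) *
      (star (hA.eigenvectorUnitary : Matrix (Fin d) (Fin d) ℂ)) := by
    conv_lhs => rw [hA.spectral_theorem, Unitary.conjStarAlgAut_apply, h1]
    rw [← Matrix.sub_mul, ← Matrix.mul_sub]
    congr 2
    rw [hd, Matrix.diagonal_sub]
    ext i
    push_cast
    simp
  rw [h2]
  refine Matrix.PosSemidef.mul_mul_conjTranspose_same ?_ _
  refine Matrix.posSemidef_diagonal_iff.mpr fun i => ?_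
  rw [Complex.zero_le_real]
  linarith [hc i]

lemma expval_shift {d : ℕ} {ρ : Matrix (Fin d) (Fin d) ℂ} (Z : Matrix (Fin d) (Fin d) ℂ)
    (h1 : ρ.trace = 1) (c : ℝ) :
    ((ρ * (Z - c • 1)).trace).re = ((ρ * Z).trace).re - c := by
  rw [Matrix.mul_sub, Matrix.trace_sub, Complex.sub_re, Matrix.mul_smul, Matrix.mul_one,
    Matrix.trace_smul, h1]
  simp [Complex.real_smul]

lemma expval_shift' {d : ℕ} {ρ : Matrix (Fin d) (Fin d) ℂ} (Z : Matrix (Fin d) (Fin d) ℂ)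
    (h1 : ρ.trace = 1) (c : ℝ) :
    ((ρ * (c • 1 - Z)).trace).re = c - ((ρ * Z).trace).re := by
  rw [Matrix.mul_sub, Matrix.trace_sub, Complex.sub_re, Matrix.mul_smul, Matrix.mul_one,
    Matrix.trace_smul, h1]
  simp [Complex.real_smul]

lemma le_expval {d : ℕ} {ρ Z : Matrix (Fin d) (Fin d) ℂ} (hZ : Z.IsHermitian)
    (hρ : ρ.PosSemidef) (h1 : ρ.trace = 1) {c : ℝ} (hc : ∀ i, c ≤ hZ.eigenvalues i) :
    c ≤ ((ρ * Z).trace).re := by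
  have h := trace_mul_psd_nonneg hρ (shift_psd hZ hc)
  rw [expval_shift Z h1 c] at h
  linarith

lemma expval_le {d : ℕ} {ρ Z : Matrix (Fin d) (Fin d) ℂ} (hZ : Z.IsHermitian)
    (hρ : ρ.PosSemidef) (h1 : ρ.trace = 1) {c : ℝ} (hc : ∀ i, hZ.eigenvalues i ≤ c) :
    ((ρ * Z).trace).re ≤ c := by
  have h := trace_mul_psd_nonneg hρ (shift_psd' hZ hc)
  rw [expval_shift' Z h1 c] at h
  linarith

lemma expval_op {d : ℕ} {ρ : Matrix (Fin d) (Fin d) ℂ} (h1 : ρ.trace = 1)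
    (A : Matrix (Fin d) (Fin d) ℂ) (s t : ℝ) :
    ((ρ * (A * A - s • A + t • 1)).trace).re
      = ((ρ * (A * A)).trace).re - s * ((ρ * A).trace).re + t := by
  rw [Matrix.mul_add, Matrix.mul_sub, Matrix.trace_add, Matrix.trace_sub, Matrix.mul_smul,
    Matrix.mul_smul, Matrix.mul_one, Matrix.trace_smul, Matrix.trace_smul, h1,
    Complex.add_re, Complex.sub_re]
  simp [Complex.real_smul]

lemma exists_sector {n : ℕ} (hn : 0 < n) {x : Fin (n + 1) → ℝ} (hx : StrictMono x) {a : ℝ}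
    (h0 : x 0 ≤ a) (h1 : a ≤ x (Fin.last n)) :
    ∃ i : Fin n, x i.castSucc ≤ a ∧ a ≤ x i.succ := by
  classical
  set S : Finset (Fin (n + 1)) := Finset.univ.filter (fun k => x k ≤ a) with hSdef
  have hS : S.Nonempty := ⟨0, by simp [hSdef, h0]⟩
  set k := S.max' hS with hk
  have hxk : x k ≤ a := by have := S.max'_mem hS; simpa [hSdef] using this
  by_cases hkl : (k : ℕ) < n
  · refine ⟨⟨k, hkl⟩, ?_, ?_⟩
    · have hcast : (⟨(k : ℕ), hkl⟩ : Fin n).castSucc = k := by ext; simp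
      rw [hcast]; exact hxk
    · by_contra h
      push_neg at h
      have hmem : (⟨(k : ℕ), hkl⟩ : Fin n).succ ∈ S := by
        simp only [hSdef, Finset.mem_filter, Finset.mem_univ, true_and]
        linarith
      have hle := S.le_max' _ hmem
      have hlt : k < (⟨(k : ℕ), hkl⟩ : Fin n).succ := by
        rw [Fin.lt_def]; simp
      exact absurd hle (not_le.mpr hlt)
  · have hkeq : k = Fin.last n := by
      ext
      have := k.isLt
      simp only [Fin.val_last]
      omega
    have hn1 : n - 1 < n := Nat.sub_lt hn one_pos
    refine ⟨⟨n - 1, hn1⟩, ?_, ?_⟩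
    · have hlt : ((⟨n - 1, hn1⟩ : Fin n).castSucc : Fin (n + 1)) ≤ Fin.last n := by
        rw [Fin.le_def]; simp
      calc x _ ≤ x (Fin.last n) := hx.monotone hlt
        _ ≤ a := hkeq ▸ hxk
    · have hsucc : (⟨n - 1, hn1⟩ : Fin n).succ = Fin.last n := by
        ext; simp; omega
      rw [hsucc]; exact h1

theorem sector_decomposition_bound {d n m : ℕ} (hn : 0 < n) (hm : 0 < m)
    (X Y ρ : Matrix (Fin d) (Fin d) ℂ)
    (hX : X.IsHermitian) (hY : Y.IsHermitian) (hρ : IsDensity ρ)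
    (x : Fin (n + 1) → ℝ) (y : Fin (m + 1) → ℝ)
    (hx : StrictMono x) (hy : StrictMono y)
    (hΛX : ∀ i, ∃ k, hX.eigenvalues i = x k)
    (hΛY : ∀ i, ∃ k, hY.eigenvalues i = y k)
    (hop : ∀ (i : Fin n) (j : Fin m),
      ((X * X - (x i.castSucc + x i.succ : ℝ) • X + (x i.castSucc * x i.succ : ℝ) • 1) +
       (Y * Y - (y j.castSucc + y j.succ : ℝ) • Y + (y j.castSucc * y j.succ : ℝ) • 1)).IsHermitian) :
    variance ρ X + variance ρ Y ≥ ⨅ p : Fin n × Fin m, lamMin (hop p.1 p.2) := by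
  obtain ⟨hρ1, hρ2⟩ := hρ
  -- bounds on expectation values
  have haX : x 0 ≤ expval ρ X :=
    le_expval hX hρ1 hρ2 fun i => by
      obtain ⟨k, hk⟩ := hΛX i; rw [hk]; exact hx.monotone (Fin.zero_le k)
  have hbX : expval ρ X ≤ x (Fin.last n) :=
    expval_le hX hρ1 hρ2 fun i => by
      obtain ⟨k, hk⟩ := hΛX i; rw [hk]; exact hx.monotone (Fin.le_last k)
  have haY : y 0 ≤ expval ρ Y :=
    le_expval hY hρ1 hρ2 fun i => by
      obtain ⟨k, hk⟩ := hΛY i; rw [hk]; exact hy.monotone (Fin.zero_le k)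
  have hbY : expval ρ Y ≤ y (Fin.last m) :=
    expval_le hY hρ1 hρ2 fun i => by
      obtain ⟨k, hk⟩ := hΛY i; rw [hk]; exact hy.monotone (Fin.le_last k)
  obtain ⟨i, hi1, hi2⟩ := exists_sector hn hx haX hbX
  obtain ⟨j, hj1, hj2⟩ := exists_sector hm hy haY hbY
  -- the sector operator
  set Xi : Matrix (Fin d) (Fin d) ℂ :=
    X * X - (x i.castSucc + x i.succ : ℝ) • X + (x i.castSucc * x i.succ : ℝ) • 1 with hXi
  set Yj : Matrix (Fin d) (Fin d) ℂ :=
    Y * Y - (y j.castSucc + y j.succ : ℝ) • Y + (y j.castSucc * y j.succ : ℝ) • 1 with hYj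
  have hsplit : ((ρ * (Xi + Yj)).trace).re = ((ρ * Xi).trace).re + ((ρ * Yj).trace).re := by
    rw [Matrix.mul_add, Matrix.trace_add, Complex.add_re]
  have hXival : ((ρ * Xi).trace).re
      = expval ρ (X * X) - (x i.castSucc + x i.succ) * expval ρ X
        + x i.castSucc * x i.succ := expval_op hρ2 X _ _
  have hYjval : ((ρ * Yj).trace).re
      = expval ρ (Y * Y) - (y j.castSucc + y j.succ) * expval ρ Y
        + y j.castSucc * y j.succ := expval_op hρ2 Y _ _
  -- lamMin bound
  have hlam : lamMin (hop i j) ≤ ((ρ * (Xi + Yj)).trace).re :=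
    le_expval (hop i j) hρ1 hρ2 fun k =>
      ciInf_le (Set.finite_range _).bddBelow k
  have hinf : (⨅ p : Fin n × Fin m, lamMin (hop p.1 p.2)) ≤ lamMin (hop i j) :=
    ciInf_le (Set.finite_range _).bddBelow (i, j)
  have hvarX : ((ρ * Xi).trace).re ≤ variance ρ X := by
    rw [hXival, variance]
    nlinarith [hi1, hi2]
  have hvarY : ((ρ * Yj).trace).re ≤ variance ρ Y := by
    rw [hYjval, variance]
    nlinarith [hj1, hj2]
  calc (⨅ p : Fin n × Fin m, lamMin (hop p.1 p.2))
      ≤ lamMin (hop i j) := hinf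
    _ ≤ ((ρ * (Xi + Yj)).trace).re := hlam
    _ = ((ρ * Xi).trace).re + ((ρ * Yj).trace).re := hsplit
    _ ≤ variance ρ X + variance ρ Y := add_le_add hvarX hvarY
end

section
/- For the spin-1 angular momentum operators J_X and J_Y of size 3, every density matrix ρ satisfies Δ²J_X + Δ²J_Y ≥ 7/16, and the bound is tight. -/
open Matrix
open scoped ComplexOrder

noncomputable def Jx3 : Matrix (Fin 3) (Fin 3) ℂ :=
  ((Real.sqrt 2)⁻¹ : ℝ) • !![0, 1, 0; 1, 0, 1; 0, 1, 0]
noncomputable def Jy3 : Matrix (Fin 3) (Fin 3) ℂ :=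
  ((Real.sqrt 2)⁻¹ : ℝ) •
    !![0, -Complex.I, 0; Complex.I, 0, -Complex.I; 0, Complex.I, 0]

lemma sumJsq_expval (ρ : Matrix (Fin 3) (Fin 3) ℂ) :
    expval ρ (Jx3 * Jx3) + expval ρ (Jy3 * Jy3)
      = (ρ 0 0).re + 2 * (ρ 1 1).re + (ρ 2 2).re := by
  have hs : Real.sqrt 2 * Real.sqrt 2 = 2 := Real.mul_self_sqrt (by norm_num)
  simp [expval, Jx3, Jy3, Matrix.trace_fin_three, Matrix.mul_apply, Fin.sum_univ_three,
    Complex.add_re, Complex.mul_re, Complex.mul_im]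
  linear_combination (((ρ 0 0).re + 2 * (ρ 1 1).re + (ρ 2 2).re) / 2) * hs

lemma expval_Jx (ρ : Matrix (Fin 3) (Fin 3) ℂ) (h10 : ρ 1 0 = star (ρ 0 1))
    (h21 : ρ 2 1 = star (ρ 1 2)) :
    expval ρ Jx3 = Real.sqrt 2 * ((ρ 0 1).re + (ρ 1 2).re) := by
  simp [expval, Jx3, Matrix.trace_fin_three, Matrix.mul_apply, Fin.sum_univ_three,
    h10, h21, Complex.add_re, Complex.mul_re, Complex.mul_im]
  ring

lemma expval_Jy (ρ : Matrix (Fin 3) (Fin 3) ℂ) (h10 : ρ 1 0 = star (ρ 0 1))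
    (h21 : ρ 2 1 = star (ρ 1 2)) :
    expval ρ Jy3 = Real.sqrt 2 * (-(ρ 0 1).im - (ρ 1 2).im) := by
  simp [expval, Jy3, Matrix.trace_fin_three, Matrix.mul_apply, Fin.sum_univ_three,
    h10, h21, Complex.add_re, Complex.mul_re, Complex.mul_im]
  ring

lemma variance_sum (ρ : Matrix (Fin 3) (Fin 3) ℂ) (h10 : ρ 1 0 = star (ρ 0 1))
    (h21 : ρ 2 1 = star (ρ 1 2)) :
    variance ρ Jx3 + variance ρ Jy3
      = (ρ 0 0).re + 2 * (ρ 1 1).re + (ρ 2 2).re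
        - 2 * (((ρ 0 1).re + (ρ 1 2).re) ^ 2 + ((ρ 0 1).im + (ρ 1 2).im) ^ 2) := by
  have hs : Real.sqrt 2 * Real.sqrt 2 = 2 := Real.mul_self_sqrt (by norm_num)
  have h := sumJsq_expval ρ
  unfold variance
  rw [expval_Jx ρ h10 h21, expval_Jy ρ h10 h21]
  nlinarith [hs, h]

/-- The weight vector of the optimal state. -/
noncomputable def vw : Fin 3 → ℝ := ![Real.sqrt 5 / 4, Real.sqrt 6 / 4, Real.sqrt 5 / 4]

/-- The optimal state. -/
noncomputable def ρw : Matrix (Fin 3) (Fin 3) ℂ :=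
  Matrix.of fun i j => ((vw i * vw j : ℝ) : ℂ)

lemma rhow_apply (i j : Fin 3) : ρw i j = ((vw i * vw j : ℝ) : ℂ) := rfl

theorem spin_one_uncertainty :
    (∀ ρ : Matrix (Fin 3) (Fin 3) ℂ, IsDensity ρ →
      variance ρ Jx3 + variance ρ Jy3 ≥ 7/16) ∧
    (∃ ρ : Matrix (Fin 3) (Fin 3) ℂ, IsDensity ρ ∧
      variance ρ Jx3 + variance ρ Jy3 = 7/16) := by
  constructor
  · intro ρ hρ
    obtain ⟨⟨hH, hQ⟩, htr⟩ := And.imp_left Matrix.posSemidef_iff_dotProduct_mulVec.mp hρ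
    have h10 : ρ 1 0 = star (ρ 0 1) := (hH.apply 1 0).symm
    have h21 : ρ 2 1 = star (ρ 1 2) := (hH.apply 2 1).symm
    have hdiag : ∀ i : Fin 3, 0 ≤ (ρ i i).re := by
      intro i
      have h := hQ (Pi.single i 1)
      rw [Complex.le_def] at h
      have h1 := h.1
      simpa [dotProduct, mulVec, Fin.sum_univ_three, Pi.single_apply] using h1
    have hr0 := hdiag 0
    have hr1 := hdiag 1
    have hr2 := hdiag 2
    have htr' : (ρ 0 0).re + (ρ 1 1).re + (ρ 2 2).re = 1 := by
      have : (ρ.trace).re = 1 := by rw [htr]; simp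
      rw [Matrix.trace_fin_three] at this
      simpa [Complex.add_re] using this
    have hquad1 : ∀ t : ℝ, 0 ≤ (ρ 1 1).re * (t * t)
        + (2 * ((ρ 0 1).re ^ 2 + (ρ 0 1).im ^ 2)) * t
        + (ρ 0 0).re * ((ρ 0 1).re ^ 2 + (ρ 0 1).im ^ 2) := by
      intro t
      have h := hQ ![ρ 0 1, (t : ℂ), 0]
      rw [Complex.le_def] at h
      have h1 := h.1
      simp [dotProduct, mulVec, Fin.sum_univ_three, h10, Complex.add_re, Complex.mul_re,
        Complex.mul_im] at h1
      nlinarith [h1]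
    have hquad2 : ∀ t : ℝ, 0 ≤ (ρ 1 1).re * (t * t)
        + (2 * ((ρ 1 2).re ^ 2 + (ρ 1 2).im ^ 2)) * t
        + (ρ 2 2).re * ((ρ 1 2).re ^ 2 + (ρ 1 2).im ^ 2) := by
      intro t
      have h := hQ ![0, (t : ℂ), ρ 2 1]
      rw [Complex.le_def] at h
      have h1 := h.1
      simp [dotProduct, mulVec, Fin.sum_univ_three, h21, Complex.add_re, Complex.mul_re,
        Complex.mul_im] at h1
      nlinarith [h1]
    have hd1 := discrim_le_zero hquad1
    have hd2 := discrim_le_zero hquad2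
    rw [discrim] at hd1 hd2
    have hm1 : (ρ 0 1).re ^ 2 + (ρ 0 1).im ^ 2 ≤ (ρ 0 0).re * (ρ 1 1).re := by
      rcases eq_or_lt_of_le (by positivity : (0:ℝ) ≤ (ρ 0 1).re ^ 2 + (ρ 0 1).im ^ 2)
        with h | h
      · rw [← h]; positivity
      · nlinarith [hd1]
    have hm2 : (ρ 1 2).re ^ 2 + (ρ 1 2).im ^ 2 ≤ (ρ 1 1).re * (ρ 2 2).re := by
      rcases eq_or_lt_of_le (by positivity : (0:ℝ) ≤ (ρ 1 2).re ^ 2 + (ρ 1 2).im ^ 2)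
        with h | h
      · rw [← h]; positivity
      · nlinarith [hd2]
    rw [variance_sum ρ h10 h21]
    nlinarith [sq_nonneg ((ρ 0 1).re - (ρ 1 2).re), sq_nonneg ((ρ 0 1).im - (ρ 1 2).im),
      sq_nonneg (2 * (ρ 1 1).re - 3/4), hm1, hm2, htr', hr1]
  · have h5 : Real.sqrt 5 * Real.sqrt 5 = 5 := Real.mul_self_sqrt (by norm_num)
    have h6 : Real.sqrt 6 * Real.sqrt 6 = 6 := Real.mul_self_sqrt (by norm_num)
    have hH : ρw.IsHermitian := by
      ext i j
      simp [Matrix.conjTranspose_apply, rhow_apply, Complex.conj_ofReal, mul_comm]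
    refine ⟨ρw, ⟨Matrix.posSemidef_iff_dotProduct_mulVec.mpr ⟨hH, ?_⟩, ?_⟩, ?_⟩
    · intro x
      have hz : dotProduct (star x) (ρw *ᵥ x)
          = star ((vw 0 : ℂ) * x 0 + (vw 1 : ℂ) * x 1 + (vw 2 : ℂ) * x 2)
            * ((vw 0 : ℂ) * x 0 + (vw 1 : ℂ) * x 1 + (vw 2 : ℂ) * x 2) := by
        simp [dotProduct, mulVec, Fin.sum_univ_three, rhow_apply, Complex.ofReal_mul,
          Complex.conj_ofReal]
        ring
      rw [hz]
      exact star_mul_self_nonneg _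
    · rw [Matrix.trace_fin_three]
      simp only [rhow_apply]
      rw [← Complex.ofReal_add, ← Complex.ofReal_add]
      norm_cast
      simp [vw]
      nlinarith [h5, h6]
    · have h10 : ρw 1 0 = star (ρw 0 1) := (hH.apply 1 0).symm
      have h21 : ρw 2 1 = star (ρw 1 2) := (hH.apply 2 1).symm
      rw [variance_sum ρw h10 h21]
      simp only [rhow_apply, Complex.ofReal_re, Complex.ofReal_im]
      simp [vw]
      nlinarith [h5, h6]
end

section
/- For the spin-1 angular momentum operators J_X, J_Y, and any α ≥ 1, every density matrix ρ satisfies Δ²J_X + α·Δ²J_Y ≥ 1/2 − 1/(16α). -/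
open Matrix
open scoped ComplexOrder

set_option maxHeartbeats 1000000 in
lemma keyF (α c u v : ℝ) (hα : 1 ≤ α) (hc : 16*α*c = 8*α - 1)
    (hu : 0 ≤ u) (hv : 0 ≤ v) :
    0 ≤ (1+(u+v)-c)*((α+(u+v)-c)*(1+α+(u+v)-c)) - 4*u*(α+(u+v)-c) - 4*α*v*(1+(u+v)-c) := by
  have hα0 : (0:ℝ) < α := by linarith
  have hcval : c = 1/2 - 1/(16*α) := by field_simp; linarith
  have hc1 : c < 1/2 := by
    rw [hcval]; have : 0 < 1/(16*α) := by positivity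
    linarith
  have hc2 : 7/16 ≤ c := by
    rw [hcval]
    have h16 : (16:ℝ) ≤ 16*α := by nlinarith
    have : 1/(16*α) ≤ 1/16 := by
      apply one_div_le_one_div_of_le <;> linarith
    linarith
  have hid : (1+(u+v)-c)*((α+(u+v)-c)*(1+α+(u+v)-c)) - 4*u*(α+(u+v)-c) - 4*α*v*(1+(u+v)-c)
      = (1+(u+v)-c)*((u+v)-c-α+1/2)^2 + 4*(α-1)*((u+v)-c)*u := by
    have h4 : 4*α*c = 2*α - 1/4 := by linarith
    nlinarith [h4, sq_nonneg (u+v)]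
  rw [hid]
  rcases le_or_gt c (u+v) with h | h
  · have h1 : 0 ≤ (1+(u+v)-c) := by linarith
    have h2 : 0 ≤ 4*(α-1)*((u+v)-c)*u := by
      have h3 : 0 ≤ (α-1)*((u+v)-c) := mul_nonneg (by linarith) (by linarith)
      nlinarith [h3]
    have h4 := mul_nonneg h1 (sq_nonneg ((u+v)-c-α+1/2))
    linarith
  · have hsge : 0 ≤ u + v := by linarith
    have h1 : (1:ℝ)/2 ≤ 1+(u+v)-c := by linarith
    have hc2c : c^2 ≤ 1/4 := by nlinarith
    have hsc : (u+v)*(c-(u+v)) ≤ 1/16 := by nlinarith [sq_nonneg (c - 2*(u+v))]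
    have hu2 : u*(c-(u+v)) ≤ 1/16 := by
      nlinarith [mul_nonneg hv (by linarith : (0:ℝ) ≤ c - (u+v))]
    have hbig : (α-1) ≤ 2*(α-1/2)^2 := by nlinarith [sq_nonneg (2*α-3/2)]
    have hAub : (α-1) * (u*(c-(u+v))) ≤ (α-1) * (1/16) :=
      mul_le_mul_of_nonneg_left hu2 (by linarith)
    have hsq : (α-1/2)^2 ≤ ((u+v)-c-α+1/2)^2 := by
      nlinarith [mul_nonneg (by linarith : (0:ℝ) ≤ c-(u+v)) (by linarith : (0:ℝ) ≤ α - 1/2)]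
    have hmain : (1/2)*(α-1/2)^2 ≤ (1+(u+v)-c)*((u+v)-c-α+1/2)^2 := by
      nlinarith [sq_nonneg ((u+v)-c-α+1/2)]
    nlinarith [hmain, hAub, hbig]

lemma keyQ (α c x y P R S : ℝ) (hα : 1 ≤ α) (hc : 16*α*c = 8*α - 1) :
    0 ≤ (1+(x^2+α*y^2)-c)*P^2 + (α+(x^2+α*y^2)-c)*R^2 + (1+α+(x^2+α*y^2)-c)*S^2
      - 4*x*P*S - 4*α*y*R*S := by
  have hα0 : (0:ℝ) < α := by linarith
  have hc1 : c < 1/2 := by nlinarith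
  have hu : 0 ≤ x^2 := sq_nonneg x
  have hv : 0 ≤ α*y^2 := by positivity
  have hA : 0 < 1+(x^2+α*y^2)-c := by linarith
  have hB : 0 < α+(x^2+α*y^2)-c := by linarith
  have hF := keyF α c (x^2) (α*y^2) hα hc hu hv
  have hid : (1+(x^2+α*y^2)-c)*(α+(x^2+α*y^2)-c)*
      ((1+(x^2+α*y^2)-c)*P^2 + (α+(x^2+α*y^2)-c)*R^2 + (1+α+(x^2+α*y^2)-c)*S^2
        - 4*x*P*S - 4*α*y*R*S)
      = (α+(x^2+α*y^2)-c)*((1+(x^2+α*y^2)-c)*P - 2*x*S)^2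
        + (1+(x^2+α*y^2)-c)*((α+(x^2+α*y^2)-c)*R - 2*α*y*S)^2
        + ((1+(x^2+α*y^2)-c)*((α+(x^2+α*y^2)-c)*(1+α+(x^2+α*y^2)-c))
            - 4*(x^2)*(α+(x^2+α*y^2)-c) - 4*α*(α*y^2)*(1+(x^2+α*y^2)-c))*S^2 := by
    ring
  have hAB : 0 < (1+(x^2+α*y^2)-c)*(α+(x^2+α*y^2)-c) := mul_pos hA hB
  rw [← mul_nonneg_iff_of_pos_left hAB, hid]
  linarith [mul_nonneg hB.le (sq_nonneg ((1+(x^2+α*y^2)-c)*P - 2*x*S)),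
    mul_nonneg hA.le (sq_nonneg ((α+(x^2+α*y^2)-c)*R - 2*α*y*S)),
    mul_nonneg hF (sq_nonneg S)]

set_option maxHeartbeats 2000000 in
lemma N_posSemidef (α c x y : ℝ) (hα : 1 ≤ α) (hc : 16*α*c = 8*α - 1) :
    (Jx3*Jx3 - ((2*x:ℝ))•Jx3 + α•(Jy3*Jy3) - ((2*α*y:ℝ))•Jy3
      + ((x^2+α*y^2-c:ℝ))•(1:Matrix (Fin 3) (Fin 3) ℂ)).PosSemidef := by
  have hJx : Jx3.IsHermitian := by
    rw [Matrix.IsHermitian]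
    ext i j
    fin_cases i <;> fin_cases j <;>
      simp [Jx3, Matrix.conjTranspose_apply]
  have hJy : Jy3.IsHermitian := by
    rw [Matrix.IsHermitian]
    ext i j
    fin_cases i <;> fin_cases j <;>
      simp [Jy3, Matrix.conjTranspose_apply]
  rw [posSemidef_iff_dotProduct_mulVec]
  constructor
  · rw [Matrix.IsHermitian]
    simp only [Matrix.conjTranspose_add, Matrix.conjTranspose_sub, Matrix.conjTranspose_smul,
      Matrix.conjTranspose_mul, Matrix.conjTranspose_one, hJx.eq, hJy.eq, star_trivial]
  · intro v
    rw [Complex.le_def]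
    constructor
    · have hs2 : Real.sqrt 2 ^ 2 = 2 := Real.sq_sqrt (by norm_num)
      have h1 := keyQ α c x y ((v 0).re + (v 2).re) ((v 2).im - (v 0).im)
        (Real.sqrt 2 * (v 1).re) hα hc
      have h2 := keyQ α c x y ((v 0).im + (v 2).im) ((v 0).re - (v 2).re)
        (Real.sqrt 2 * (v 1).im) hα hc
      rw [mul_pow, hs2] at h1 h2
      simp only [Complex.zero_re]
      simp [Jx3, Jy3, mulVec, dotProduct, Fin.sum_univ_three, Matrix.mul_apply,
        Matrix.one_apply, Pi.star_apply, RCLike.star_def]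
      ring_nf
      simp [← Complex.ofReal_pow]
      linarith [h1, h2]
    · simp only [Complex.zero_im]
      symm
      simp [Jx3, Jy3, mulVec, dotProduct, Fin.sum_univ_three, Matrix.mul_apply,
        Matrix.one_apply, Pi.star_apply, RCLike.star_def]
      ring_nf
      simp [← Complex.ofReal_pow]

lemma trace_mul_psd_re {d : ℕ} (ρ N : Matrix (Fin d) (Fin d) ℂ)
    (hρ : ρ.PosSemidef) (hN : N.PosSemidef) : 0 ≤ ((ρ * N).trace).re := by
  open scoped MatrixOrder Matrix.Norms.L2Operator in
  obtain ⟨B, rfl⟩ := CStarAlgebra.nonneg_iff_eq_star_mul_self.mp hρ.nonneg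
  rw [Matrix.mul_assoc, Matrix.trace_mul_comm]
  have hP : ((B * N) * Bᴴ).PosSemidef := hN.mul_mul_conjTranspose_same B
  have hdiag : ∀ i, 0 ≤ ((B * N) * Bᴴ) i i := by
    intro i
    have h := hP.dotProduct_mulVec_nonneg (Pi.single i 1)
    simpa [dotProduct, Pi.single_apply, mulVec, Finset.sum_ite_eq, apply_ite] using h
  have : (0:ℂ) ≤ ((B * N) * Bᴴ).trace := Finset.sum_nonneg fun i _ => hdiag i
  exact (Complex.le_def.mp this).1

theorem spin_one_weighted_uncertainty_ge_one (α : ℝ) (hα : 1 ≤ α)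
    (ρ : Matrix (Fin 3) (Fin 3) ℂ) (hρ : IsDensity ρ) :
    variance ρ Jx3 + α * variance ρ Jy3 ≥ 1/2 - 1/(16 * α) := by
  have hα0 : (0:ℝ) < α := by linarith
  set c : ℝ := 1/2 - 1/(16*α) with hcdef
  have hc : 16*α*c = 8*α - 1 := by
    rw [hcdef]; field_simp; ring
  set x : ℝ := expval ρ Jx3 with hx
  set y : ℝ := expval ρ Jy3 with hy
  have hN := N_posSemidef α c x y hα hc
  have htr := trace_mul_psd_re ρ _ hρ.1 hN
  have hexp : ((ρ * (Jx3*Jx3 - ((2*x:ℝ))•Jx3 + α•(Jy3*Jy3) - ((2*α*y:ℝ))•Jy3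
      + ((x^2+α*y^2-c:ℝ))•(1:Matrix (Fin 3) (Fin 3) ℂ))).trace).re
      = expval ρ (Jx3*Jx3) - 2*x*(expval ρ Jx3) + α*(expval ρ (Jy3*Jy3))
        - 2*α*y*(expval ρ Jy3) + (x^2+α*y^2-c)*((ρ.trace).re) := by
    rw [Matrix.mul_add, Matrix.mul_sub, Matrix.mul_add, Matrix.mul_sub]
    rw [Matrix.mul_smul, Matrix.mul_smul, Matrix.mul_smul, Matrix.mul_smul, Matrix.mul_one]
    rw [Matrix.trace_add, Matrix.trace_sub, Matrix.trace_add, Matrix.trace_sub,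
      Matrix.trace_smul, Matrix.trace_smul, Matrix.trace_smul]
    simp [Complex.add_re, Complex.sub_re, Complex.smul_re, expval,
      ← Complex.ofReal_pow, Complex.ofReal_re, Complex.ofReal_im]
  rw [hexp] at htr
  rw [hρ.2] at htr
  simp only [Complex.one_re] at htr
  have hvx : variance ρ Jx3 = expval ρ (Jx3*Jx3) - x^2 := rfl
  have hvy : variance ρ Jy3 = expval ρ (Jy3*Jy3) - y^2 := rfl
  rw [ge_iff_le]
  rw [hvx, hvy]
  linarith [htr]
end

section
/- For the spin-1 angular momentum operators J_X, J_Y, and any 0 < α ≤ 1, every density matrix ρ satisfies Δ²J_X + α·Δ²J_Y ≥ α/2 − α²/16. -/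
open Matrix
open scoped ComplexOrder

/- ---------- auxiliary lemmas ---------- -/

lemma aux_det_nonneg (a u v : ℝ) (ha0 : 0 < a) (ha1 : a ≤ 1) (hu : 0 ≤ u) (hv : 0 ≤ v) :
    0 ≤ (a/2 + a^2/16 + u + a*v) * ((1 - u - a^2/16 - a*v)^2 + 4*a*v)
      - 4*a^2*v*(1 - a/2 + a^2/16 + u + a*v) := by
  have H : ∀ t w : ℝ, 0 ≤ w → w ≤ t →
      0 ≤ (a/2+a^2/16+t)*(1-t-a^2/16)^2 + 4*w*(1-a)*(t-a/2+a^2/16) := by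
    intro t w hw0 hwt
    have ht0 : 0 ≤ t := le_trans hw0 hwt
    rcases le_or_gt (a/2 - a^2/16) t with h | h
    · have h1 : 0 ≤ 4*w*(1-a)*(t-a/2+a^2/16) :=
        mul_nonneg (mul_nonneg (by linarith) (by linarith)) (by linarith)
      have h2 : 0 ≤ (a/2+a^2/16+t)*(1-t-a^2/16)^2 :=
        mul_nonneg (by positivity) (sq_nonneg _)
      linarith
    · have hs : (1-a/2)^2 ≤ (1-t-a^2/16)^2 := by nlinarith
      have h3 := mul_le_mul_of_nonneg_left hs (show (0:ℝ) ≤ a/2+a^2/16+t by positivity)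
      have hB : 4*w*(1-a)*(a/2-a^2/16-t) ≤ 4*t*(1-a)*(a/2-a^2/16-t) := by
        apply mul_le_mul_of_nonneg_right _ (by linarith)
        apply mul_le_mul_of_nonneg_right _ (by linarith)
        linarith
      have hC : 0 ≤ (a/2+a^2/16+t)*(1-a/2)^2 - 4*t*(1-a)*(a/2-a^2/16-t) := by
        have hid : (a/2+a^2/16+t)*(1-a/2)^2 - 4*t*(1-a)*(a/2-a^2/16-t)
            = (a/2+a^2/16)*(1-a/2)^2 + t*(3*a-2)^2/4 + t*a^2*(1-a)/4 + 4*t^2*(1-a) := by ring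
        rw [hid]
        have c1 : 0 ≤ (a/2+a^2/16)*(1-a/2)^2 := mul_nonneg (by positivity) (sq_nonneg _)
        have c2 : 0 ≤ t*(3*a-2)^2/4 := by positivity
        have c3 : 0 ≤ t*a^2*(1-a)/4 := by
          have := mul_nonneg (mul_nonneg ht0 (sq_nonneg a)) (show (0:ℝ) ≤ 1-a by linarith)
          linarith
        have c4 : 0 ≤ 4*t^2*(1-a) := by
          have := mul_nonneg (sq_nonneg t) (show (0:ℝ) ≤ 1-a by linarith)
          linarith
        linarith
      linarith
  have key : (a/2 + a^2/16 + u + a*v) * ((1 - u - a^2/16 - a*v)^2 + 4*a*v)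
      - 4*a^2*v*(1 - a/2 + a^2/16 + u + a*v)
      = (a/2+a^2/16+(u+a*v))*(1-(u+a*v)-a^2/16)^2
        + 4*(a*v)*(1-a)*((u+a*v)-a/2+a^2/16) := by ring
  rw [key]
  exact H (u+a*v) (a*v) (mul_nonneg ha0.le hv) (by linarith)

lemma aux_Gkey (a x y S T D : ℝ) (ha0 : 0 < a) (ha1 : a ≤ 1) :
    0 ≤ (1 - a/2 + a^2/16 + x^2 + a*y^2)*S^2 + (1 + a/2 + a^2/16 + x^2 + a*y^2)*T^2
      + (a/2 + a^2/16 + x^2 + a*y^2)*D^2 - 4*x*S*T + 4*a*y*D*T := by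
  set Pb := 1 - a/2 + a^2/16 + x^2 + a*y^2 with hPb
  set Q := 1 + a/2 + a^2/16 + x^2 + a*y^2 with hQ
  set Pm := a/2 + a^2/16 + x^2 + a*y^2 with hPm
  clear_value Pb Q Pm
  have hPb0 : 0 < Pb := by rw [hPb]; nlinarith [sq_nonneg x, mul_nonneg ha0.le (sq_nonneg y)]
  have hPm0 : 0 < Pm := by rw [hPm]; nlinarith [sq_nonneg x, mul_nonneg ha0.le (sq_nonneg y)]
  have hm2 : Pb*Q - 4*x^2 = (1 - x^2 - a^2/16 - a*y^2)^2 + 4*a*y^2 := by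
    rw [hPb, hQ]; ring
  have hm2nn : 0 ≤ Pb*Q - 4*x^2 := by
    rw [hm2]; positivity
  have hdet : 0 ≤ Pm*(Pb*Q - 4*x^2) - 4*a^2*y^2*Pb := by
    have := aux_det_nonneg a (x^2) (y^2) ha0 ha1 (sq_nonneg x) (sq_nonneg y)
    rw [hm2, hPm, hPb]; nlinarith [this]
  rcases eq_or_ne y 0 with hy | hy
  · subst hy
    have hid : Pb * ((Pb)*S^2 + Q*T^2 + Pm*D^2 - 4*x*S*T + 4*a*0*D*T)
        = (Pb*S - 2*x*T)^2 + (Pb*Q - 4*x^2)*T^2 + Pb*Pm*D^2 := by ring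
    nlinarith [sq_nonneg (Pb*S - 2*x*T), mul_nonneg hm2nn (sq_nonneg T),
      mul_nonneg (mul_nonneg hPb0.le hPm0.le) (sq_nonneg D), hid, hPb0]
  · have hm2pos : 0 < Pb*Q - 4*x^2 := by
      rw [hm2]
      have : 0 < 4*a*y^2 := by positivity
      nlinarith [sq_nonneg (1 - x^2 - a^2/16 - a*y^2)]
    set m2 := Pb*Q - 4*x^2 with hm2d
    clear_value m2
    have hid : m2 * Pb * (Pb*S^2 + Q*T^2 + Pm*D^2 - 4*x*S*T + 4*a*y*D*T)
        = m2*(Pb*S - 2*x*T)^2 + (m2*T + 2*a*y*Pb*D)^2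
          + Pb*(Pm*m2 - 4*a^2*y^2*Pb)*D^2 := by rw [hm2d]; ring
    have hrhs : 0 ≤ m2*(Pb*S - 2*x*T)^2 + (m2*T + 2*a*y*Pb*D)^2
          + Pb*(Pm*m2 - 4*a^2*y^2*Pb)*D^2 := by
      have t1 : 0 ≤ m2*(Pb*S - 2*x*T)^2 := mul_nonneg hm2pos.le (sq_nonneg _)
      have t2 : 0 ≤ (m2*T + 2*a*y*Pb*D)^2 := sq_nonneg _
      have t3 : 0 ≤ Pb*(Pm*m2 - 4*a^2*y^2*Pb)*D^2 :=
        mul_nonneg (mul_nonneg hPb0.le hdet) (sq_nonneg _)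
      linarith
    have hprod : 0 < m2 * Pb := mul_pos hm2pos hPb0
    by_contra hcon
    push_neg at hcon
    have hneg : m2 * Pb * (Pb*S^2 + Q*T^2 + Pm*D^2 - 4*x*S*T + 4*a*y*D*T) < 0 :=
      mul_neg_of_pos_of_neg hprod hcon
    linarith [hid, hrhs, hneg]

lemma aux_psd_diag_nonneg {d : ℕ} {M : Matrix (Fin d) (Fin d) ℂ} (hM : M.PosSemidef) (i : Fin d) :
    0 ≤ M i i := by
  have h := hM.dotProduct_mulVec_nonneg (fun j => if j = i then (1:ℂ) else 0)
  have e1 : (M *ᵥ fun j => if j = i then (1:ℂ) else 0) = fun j => M j i := by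
    ext j
    simp [Matrix.mulVec, dotProduct]
  rw [e1] at h
  have e2 : (star (fun j => if j = i then (1:ℂ) else 0) ⬝ᵥ fun j => M j i) = M i i := by
    simp [dotProduct, Pi.star_apply, apply_ite, star_one, star_zero, ite_mul,
      one_mul, zero_mul, Finset.sum_ite_eq']
  rwa [e2] at h

lemma aux_psd_trace_re_nonneg {d : ℕ} {M : Matrix (Fin d) (Fin d) ℂ} (hM : M.PosSemidef) :
    0 ≤ M.trace.re := by
  have : (0:ℂ) ≤ M.trace := Finset.sum_nonneg fun i _ => aux_psd_diag_nonneg hM i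
  exact (Complex.le_def.mp this).1

lemma aux_trace_mul_psd_re_nonneg {d : ℕ} {ρ N : Matrix (Fin d) (Fin d) ℂ}
    (hρ : ρ.PosSemidef) (hN : N.PosSemidef) : 0 ≤ ((ρ * N).trace).re := by
  obtain ⟨B, hB⟩ : ∃ B : Matrix (Fin d) (Fin d) ℂ, ρ = Bᴴ * B := by
    open scoped MatrixOrder in
    obtain ⟨B, hB⟩ := CStarAlgebra.nonneg_iff_eq_star_mul_self.mp hρ.nonneg
    exact ⟨B, hB⟩
  have h1 : (ρ * N).trace = (B * N * Bᴴ).trace := by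
    rw [hB, Matrix.mul_assoc, Matrix.trace_mul_comm, Matrix.mul_assoc]
  rw [h1]
  exact aux_psd_trace_re_nonneg (hN.mul_mul_conjTranspose_same B)

set_option maxHeartbeats 1000000 in
lemma aux_entries (α x y : ℝ) :
    (Jx3*Jx3 + (α:ℂ)•(Jy3*Jy3) - ((2*x:ℝ):ℂ)•Jx3 - ((2*α*y:ℝ):ℂ)•Jy3
      + (((x^2 + α*y^2) - (α/2 - α^2/16) : ℝ):ℂ)•(1:Matrix (Fin 3) (Fin 3) ℂ))
    = !![((1/2 + α^2/16 + x^2 + α*y^2 : ℝ):ℂ),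
         -(((Real.sqrt 2:ℝ):ℂ)*((x:ℂ) - Complex.I*(α:ℂ)*(y:ℂ))),
         (((1-α)/2 : ℝ):ℂ);
         -(((Real.sqrt 2:ℝ):ℂ)*((x:ℂ) + Complex.I*(α:ℂ)*(y:ℂ))),
         ((1 + α/2 + α^2/16 + x^2 + α*y^2 : ℝ):ℂ),
         -(((Real.sqrt 2:ℝ):ℂ)*((x:ℂ) - Complex.I*(α:ℂ)*(y:ℂ)));
         (((1-α)/2 : ℝ):ℂ),
         -(((Real.sqrt 2:ℝ):ℂ)*((x:ℂ) + Complex.I*(α:ℂ)*(y:ℂ))),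
         ((1/2 + α^2/16 + x^2 + α*y^2 : ℝ):ℂ)] := by
  have hs2 : ((Real.sqrt 2:ℝ):ℂ)^2 = 2 := by
    norm_cast
    rw [Real.sq_sqrt]; norm_num
  have hinv : (((Real.sqrt 2)⁻¹:ℝ):ℂ) = ((Real.sqrt 2:ℝ):ℂ)/2 := by
    have hs0 : ((Real.sqrt 2:ℝ):ℂ) ≠ 0 :=
      Complex.ofReal_ne_zero.mpr (by positivity)
    push_cast
    field_simp
    first
      | linear_combination hs2
      | linear_combination (-1)*hs2
      | linear_combination 2*hs2
      | linear_combination (-2)*hs2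
      | linear_combination 3*hs2
      | linear_combination (-3)*hs2
  ext i j
  fin_cases i <;> fin_cases j <;>
    simp [Jx3, Jy3, hinv, Matrix.add_apply, Matrix.sub_apply, Matrix.smul_apply,
      Matrix.mul_apply, Fin.sum_univ_three, Matrix.one_apply, Complex.real_smul, Complex.I_sq]
  all_goals push_cast
  all_goals ring_nf
  all_goals simp only [Complex.I_sq]
  all_goals ring_nf
  all_goals first
    | linear_combination (1+(α:ℂ))/4 * hs2
    | linear_combination (1+(α:ℂ))/2 * hs2
    | linear_combination (1-(α:ℂ))/4 * hs2
    | linear_combination ((α:ℂ)-1)/4 * hs2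
    | linear_combination ((α:ℂ)+1)/4 * hs2

set_option maxHeartbeats 1000000 in
lemma aux_expl_psd (α x y : ℝ) (hα0 : 0 < α) (hα1 : α ≤ 1) :
    (!![((1/2 + α^2/16 + x^2 + α*y^2 : ℝ):ℂ),
         -(((Real.sqrt 2:ℝ):ℂ)*((x:ℂ) - Complex.I*(α:ℂ)*(y:ℂ))),
         (((1-α)/2 : ℝ):ℂ);
         -(((Real.sqrt 2:ℝ):ℂ)*((x:ℂ) + Complex.I*(α:ℂ)*(y:ℂ))),
         ((1 + α/2 + α^2/16 + x^2 + α*y^2 : ℝ):ℂ),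
         -(((Real.sqrt 2:ℝ):ℂ)*((x:ℂ) - Complex.I*(α:ℂ)*(y:ℂ)));
         (((1-α)/2 : ℝ):ℂ),
         -(((Real.sqrt 2:ℝ):ℂ)*((x:ℂ) + Complex.I*(α:ℂ)*(y:ℂ))),
         ((1/2 + α^2/16 + x^2 + α*y^2 : ℝ):ℂ)]).PosSemidef := by
  have hs2 : (Real.sqrt 2)^2 = 2 := Real.sq_sqrt (by norm_num)
  refine Matrix.PosSemidef.of_dotProduct_mulVec_nonneg ?_ ?_
  · show _ = _
    ext i j
    fin_cases i <;> fin_cases j <;>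
      simp [Matrix.conjTranspose_apply, Complex.ext_iff]
  · intro z
    have g1 := aux_Gkey α x y ((z 0).re + (z 2).re) (Real.sqrt 2 * (z 1).re)
      ((z 0).im - (z 2).im) hα0 hα1
    have g2 := aux_Gkey α x y ((z 0).im + (z 2).im) (Real.sqrt 2 * (z 1).im)
      (-((z 0).re - (z 2).re)) hα0 hα1
    rw [Complex.le_def]
    constructor
    · simp [dotProduct, Matrix.mulVec, Fin.sum_univ_three, Pi.star_apply,
        Matrix.cons_val', Matrix.cons_val_zero, Matrix.cons_val_one, Matrix.head_cons,
        Matrix.empty_val', Matrix.cons_val_fin_one, Matrix.cons_val_two, Matrix.tail_cons,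
        Complex.add_re, Complex.add_im, Complex.mul_re, Complex.mul_im, Complex.sub_re,
        Complex.sub_im, Complex.neg_re, Complex.neg_im, Complex.I_re, Complex.I_im,
        Complex.ofReal_re, Complex.ofReal_im, Complex.zero_re, Complex.zero_im,
        RCLike.star_def, Complex.conj_re, Complex.conj_im, ← Complex.ofReal_pow]
      ring_nf
      ring_nf at g1 g2
      simp only [hs2] at g1 g2
      ring_nf at g1 g2
      linarith [g1, g2]
    · simp [dotProduct, Matrix.mulVec, Fin.sum_univ_three, Pi.star_apply,
        Matrix.cons_val', Matrix.cons_val_zero, Matrix.cons_val_one, Matrix.head_cons,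
        Matrix.empty_val', Matrix.cons_val_fin_one, Matrix.cons_val_two, Matrix.tail_cons,
        Complex.add_re, Complex.add_im, Complex.mul_re, Complex.mul_im, Complex.sub_re,
        Complex.sub_im, Complex.neg_re, Complex.neg_im, Complex.I_re, Complex.I_im,
        Complex.ofReal_re, Complex.ofReal_im, Complex.zero_re, Complex.zero_im,
        RCLike.star_def, Complex.conj_re, Complex.conj_im, ← Complex.ofReal_pow]
      ring

theorem spin_one_weighted_uncertainty_le_one (α : ℝ) (hα0 : 0 < α) (hα1 : α ≤ 1)
    (ρ : Matrix (Fin 3) (Fin 3) ℂ) (hρ : IsDensity ρ) :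
    variance ρ Jx3 + α * variance ρ Jy3 ≥ α/2 - α^2/16 := by
  obtain ⟨hpsd, htr⟩ := hρ
  set x := expval ρ Jx3 with hx
  set y := expval ρ Jy3 with hy
  set N := Jx3*Jx3 + (α:ℂ)•(Jy3*Jy3) - ((2*x:ℝ):ℂ)•Jx3 - ((2*α*y:ℝ):ℂ)•Jy3
      + (((x^2 + α*y^2) - (α/2 - α^2/16) : ℝ):ℂ)•(1:Matrix (Fin 3) (Fin 3) ℂ) with hNdef
  have hpsdN : N.PosSemidef := by
    rw [hNdef, aux_entries α x y]
    exact aux_expl_psd α x y hα0 hα1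
  have htrace : 0 ≤ ((ρ * N).trace).re := aux_trace_mul_psd_re_nonneg hpsd hpsdN
  have hsplit : ρ * N = ρ*(Jx3*Jx3) + (α:ℂ)•(ρ*(Jy3*Jy3)) - ((2*x:ℝ):ℂ)•(ρ*Jx3)
      - ((2*α*y:ℝ):ℂ)•(ρ*Jy3) + (((x^2 + α*y^2) - (α/2 - α^2/16) : ℝ):ℂ)•ρ := by
    rw [hNdef]
    simp [mul_add, mul_sub, Matrix.mul_smul, mul_one]
  have hexp : ((ρ * N).trace).re
      = expval ρ (Jx3*Jx3) + α * expval ρ (Jy3*Jy3) - 2*x*x - 2*α*y*y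
        + (x^2 + α*y^2 - (α/2 - α^2/16)) := by
    rw [hsplit]
    have hxe : ((ρ*Jx3).trace).re = x := by rw [hx]; rfl
    have hye : ((ρ*Jy3).trace).re = y := by rw [hy]; rfl
    simp [Matrix.trace_add, Matrix.trace_sub, Matrix.trace_smul, smul_eq_mul,
      Complex.add_re, Complex.sub_re, Complex.mul_re, Complex.ofReal_re, Complex.ofReal_im,
      htr, expval, hxe, hye, Complex.one_re, ← Complex.ofReal_pow]
    try ring
  have hvx : variance ρ Jx3 = expval ρ (Jx3*Jx3) - x^2 := by
    rw [variance, hx]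
  have hvy : variance ρ Jy3 = expval ρ (Jy3*Jy3) - y^2 := by
    rw [variance, hy]
  rw [ge_iff_le, hvx, hvy]
  nlinarith [htrace, hexp]
end

section
/- Let X = diag(−1,0,1) and Y = [[0,1,0],[1,0,i],[0,−i,0]]. Then every density matrix ρ of size 3 satisfies Δ²X_ρ + Δ²Y_ρ ≥ 15/32. -/
open Matrix
open scoped ComplexOrder

noncomputable def Xm : Matrix (Fin 3) (Fin 3) ℂ := !![-1, 0, 0; 0, 0, 0; 0, 0, 1]
noncomputable def Ym : Matrix (Fin 3) (Fin 3) ℂ :=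
  !![0, 1, 0; 1, 0, Complex.I; 0, -Complex.I, 0]

noncomputable def Km (a b : ℝ) : Matrix (Fin 3) (Fin 3) ℂ :=
  !![((a^2+2*a+b^2+49/32 : ℝ) : ℂ), ((-2*b : ℝ) : ℂ), Complex.I;
     ((-2*b : ℝ) : ℂ), ((a^2+b^2+49/32 : ℝ) : ℂ), ((-2*b : ℝ) : ℂ) * Complex.I;
     -Complex.I, ((2*b : ℝ) : ℂ) * Complex.I, ((a^2-2*a+b^2+49/32 : ℝ) : ℂ)]

theorem Km_herm (a b : ℝ) : (Km a b).IsHermitian := by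
  unfold Matrix.IsHermitian
  ext i j
  fin_cases i <;> fin_cases j <;>
    simp [Km, Matrix.conjTranspose_apply, Complex.ext_iff]

theorem Km_decomp (a b : ℝ) :
    Km a b = Xm * Xm + Ym * Ym + (-(2*a) : ℝ) • Xm + (-(2*b) : ℝ) • Ym
      + ((a^2+b^2-15/32 : ℝ) : ℂ) • (1 : Matrix (Fin 3) (Fin 3) ℂ) := by
  ext i j
  fin_cases i <;> fin_cases j <;>
    simp [Km, Xm, Ym, Matrix.mul_apply, Fin.sum_univ_three, Matrix.one_apply,
      Complex.ext_iff, Complex.real_smul] <;> ring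

theorem Km_trace (a b : ℝ) : (Km a b).trace = ((3*(a^2+b^2)+147/32 : ℝ) : ℂ) := by
  simp [Km, Matrix.trace_fin_three]
  push_cast
  ring

theorem Km_trace_sq (a b : ℝ) : ((Km a b) * (Km a b)).trace =
    (((a^2+2*a+b^2+49/32)^2 + (a^2+b^2+49/32)^2 + (a^2-2*a+b^2+49/32)^2
      + 16*b^2 + 2 : ℝ) : ℂ) := by
  simp [Km, Matrix.trace_fin_three, Matrix.mul_apply, Fin.sum_univ_three]
  push_cast
  linear_combination (-8*(b:ℂ)^2) * Complex.I_sq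

theorem Km_det (a b : ℝ) : (Km a b).det =
    (((a^2+b^2+49/32)^3 - 4*a^2*(a^2+b^2+49/32) - (8*b^2+1)*(a^2+b^2+49/32) + 8*b^2 : ℝ) : ℂ) := by
  simp [Km, Matrix.det_fin_three]
  push_cast
  linear_combination (4*(b:ℂ)^2*((a:ℂ)^2+2*a+(b:ℂ)^2+49/32) + ((a:ℂ)^2+(b:ℂ)^2+49/32) - 8*(b:ℂ)^2) * Complex.I_sq

theorem cubic_nonneg {t0 t1 t2 : ℝ} (h1 : 0 ≤ t0+t1+t2) (h2 : 0 ≤ t0*t1+t0*t2+t1*t2)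
    (h3 : 0 ≤ t0*t1*t2) : 0 ≤ t0 := by
  by_contra h
  push_neg at h
  nlinarith [mul_nonneg h1 (sq_nonneg t0), mul_nonneg h2 (neg_nonneg.mpr h.le),
    mul_neg_of_pos_of_neg (mul_pos_of_neg_of_neg h h) h]

theorem trace_eq_sum_eig {n : Type*} [Fintype n] [DecidableEq n]
    {A : Matrix n n ℂ} (hA : A.IsHermitian) :
    A.trace = ∑ i, (hA.eigenvalues i : ℂ) := by
  conv_lhs => rw [hA.spectral_theorem, Unitary.conjStarAlgAut_apply]
  rw [Matrix.trace_mul_cycle]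
  simp [Matrix.mem_unitaryGroup_iff'.mp (hA.eigenvectorUnitary).2, Matrix.trace_diagonal]

theorem trace_sq_eq_sum_eig {n : Type*} [Fintype n] [DecidableEq n]
    {A : Matrix n n ℂ} (hA : A.IsHermitian) :
    (A * A).trace = ∑ i, ((hA.eigenvalues i : ℂ))^2 := by
  have h1 : star (hA.eigenvectorUnitary : Matrix n n ℂ) * (hA.eigenvectorUnitary : Matrix n n ℂ) = 1 :=
    Matrix.mem_unitaryGroup_iff'.mp (hA.eigenvectorUnitary).2
  have h2 : ∀ B : Matrix n n ℂ, star (hA.eigenvectorUnitary : Matrix n n ℂ) *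
      ((hA.eigenvectorUnitary : Matrix n n ℂ) * B) = B := fun B => by
    rw [← Matrix.mul_assoc, h1, Matrix.one_mul]
  conv_lhs => rw [hA.spectral_theorem, Unitary.conjStarAlgAut_apply]
  simp only [Matrix.mul_assoc, h2]
  rw [Matrix.trace_mul_comm]
  simp only [Matrix.mul_assoc, h2]
  rw [Matrix.trace_mul_comm]
  simp only [Matrix.mul_assoc, h2]
  simp [Matrix.diagonal_mul_diagonal, Matrix.trace_diagonal, sq]

theorem trace_mul_psd_nonneg_s16 {n : Type*} [Fintype n] [DecidableEq n]
    {ρ K : Matrix n n ℂ} (hρ : ρ.PosSemidef) (hK : K.PosSemidef) :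
    0 ≤ ((ρ * K).trace).re := by
  obtain ⟨B, rfl⟩ : ∃ B : Matrix n n ℂ, ρ = star B * B := by
    open scoped MatrixOrder Matrix.Norms.L2Operator in
    exact CStarAlgebra.nonneg_iff_eq_star_mul_self.mp hρ.nonneg
  rw [Matrix.star_eq_conjTranspose]
  rw [Matrix.mul_assoc, Matrix.trace_mul_comm]
  have hBKB : (B * K * Bᴴ).PosSemidef := hK.mul_mul_conjTranspose_same B
  rw [Matrix.trace, Complex.re_sum]
  apply Finset.sum_nonneg
  intro i _
  have h := hBKB.dotProduct_mulVec_nonneg (fun j => if j = i then (1:ℂ) else 0)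
  have hd : star (fun j => if j = i then (1:ℂ) else 0) ⬝ᵥ
      ((B * K * Bᴴ) *ᵥ fun j => if j = i then 1 else 0) = (B * K * Bᴴ) i i := by
    simp [dotProduct, Matrix.mulVec]
  rw [hd] at h
  simpa using (Complex.le_def.mp h).1

set_option maxHeartbeats 1000000 in
theorem Km_psd (a b : ℝ) : (Km a b).PosSemidef := by
  have hH := Km_herm a b
  apply hH.posSemidef_iff_eigenvalues_nonneg.mpr
  have hsum : hH.eigenvalues 0 + hH.eigenvalues 1 + hH.eigenvalues 2
      = 3*(a^2+b^2)+147/32 := by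
    have h := (trace_eq_sum_eig hH).symm.trans (Km_trace a b)
    rw [Fin.sum_univ_three] at h
    exact Complex.ofReal_inj.mp (by push_cast at h ⊢; linear_combination h)
  have hsq : (hH.eigenvalues 0)^2 + (hH.eigenvalues 1)^2 + (hH.eigenvalues 2)^2
      = (a^2+2*a+b^2+49/32)^2 + (a^2+b^2+49/32)^2 + (a^2-2*a+b^2+49/32)^2
        + 16*b^2 + 2 := by
    have h := (trace_sq_eq_sum_eig hH).symm.trans (Km_trace_sq a b)
    rw [Fin.sum_univ_three] at h
    exact Complex.ofReal_inj.mp (by push_cast at h ⊢; linear_combination h)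
  have hprod : hH.eigenvalues 0 * hH.eigenvalues 1 * hH.eigenvalues 2
      = (a^2+b^2+49/32)^3 - 4*a^2*(a^2+b^2+49/32) - (8*b^2+1)*(a^2+b^2+49/32) + 8*b^2 := by
    have h := hH.det_eq_prod_eigenvalues.symm.trans (Km_det a b)
    rw [Fin.prod_univ_three] at h
    simp only [show ∀ x : ℝ, (RCLike.ofReal x : ℂ) = Complex.ofReal x from fun _ => rfl] at h
    exact Complex.ofReal_inj.mp (by push_cast at h ⊢; linear_combination h)
  set e0 := hH.eigenvalues 0
  set e1 := hH.eigenvalues 1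
  set e2 := hH.eigenvalues 2
  have hs : (0:ℝ) ≤ a^2 := sq_nonneg a
  have ht : (0:ℝ) ≤ b^2 := sq_nonneg b
  have h1 : 0 ≤ e0 + e1 + e2 := by rw [hsum]; positivity
  have h2 : 0 ≤ e0*e1 + e0*e2 + e1*e2 := by nlinarith [hsum, hsq, sq_nonneg (a*b)]
  have h3 : 0 ≤ e0*e1*e2 := by
    rw [hprod]
    nlinarith [sq_nonneg (b^2 - 63/32), mul_nonneg ht (sq_nonneg (b^2 - 63/32)),
      mul_nonneg hs (mul_nonneg hs hs), mul_nonneg (mul_nonneg hs hs) ht,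
      mul_nonneg hs (mul_nonneg ht ht), mul_nonneg hs ht, sq_nonneg (a^2),
      mul_nonneg hs (sq_nonneg (b^2 - 63/32)), sq_nonneg (a^2 + 3*b^2 - 93/32)]
  have he0 : 0 ≤ e0 := cubic_nonneg h1 h2 h3
  have he1 : 0 ≤ e1 := cubic_nonneg (t0 := e1) (t1 := e0) (t2 := e2)
    (by linarith) (by nlinarith [h2]) (by nlinarith [h3])
  have he2 : 0 ≤ e2 := cubic_nonneg (t0 := e2) (t1 := e0) (t2 := e1)
    (by linarith) (by nlinarith [h2]) (by nlinarith [h3])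
  intro i
  fin_cases i
  · exact he0
  · exact he1
  · exact he2

theorem nonmomentum_uncertainty (ρ : Matrix (Fin 3) (Fin 3) ℂ) (hρ : IsDensity ρ) :
    variance ρ (!![-1, 0, 0; 0, 0, 0; 0, 0, 1] : Matrix (Fin 3) (Fin 3) ℂ) +
      variance ρ (!![0, 1, 0; 1, 0, Complex.I; 0, -Complex.I, 0] :
        Matrix (Fin 3) (Fin 3) ℂ) ≥ 15/32 := by
  obtain ⟨hpsd, htr⟩ := hρ
  show variance ρ Xm + variance ρ Ym ≥ 15/32
  set a := expval ρ Xm with ha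
  set b := expval ρ Ym with hb
  have h0 : 0 ≤ ((ρ * Km a b).trace).re := trace_mul_psd_nonneg_s16 hpsd (Km_psd a b)
  have hkey : ((ρ * Km a b).trace).re = variance ρ Xm + variance ρ Ym - 15/32 := by
    rw [Km_decomp]
    simp only [Matrix.mul_add, Matrix.trace_add, Matrix.mul_smul, Matrix.trace_smul,
      Matrix.mul_one]
    rw [htr]
    simp only [Complex.add_re, Complex.real_smul, Complex.mul_re, Complex.ofReal_re,
      Complex.ofReal_im, Complex.one_re, Complex.one_im, smul_eq_mul]
    simp only [variance, expval, ha, hb]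
    ring
  linarith
end

section
/- Let X = diag(1,−1) and Y = [[a,b],[b̄,−a]] with a ∈ ℝ, b ∈ ℂ. Then the minimum over all 2×2 density matrices ρ of Δ²X_ρ + Δ²Y_ρ equals C = (1/2)(a² + |b|² + 1 − √((a² + |b|² + 1)² − 4|b|²)). -/
open Matrix
open scoped ComplexOrder

lemma quad_aux (p q cr ci xr xi yr yi : ℝ) (hp : 0 ≤ p) (hq : 0 ≤ q)
    (h : cr*cr + ci*ci ≤ p*q) :
    0 ≤ p*(xr^2+xi^2) + q*(yr^2+yi^2)
      + 2*(cr*(xr*yr+xi*yi) + ci*(xi*yr - xr*yi)) := by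
  set A := xr^2+xi^2 with hA
  set B := yr^2+yi^2 with hB
  set u := xr*yr+xi*yi with hu
  set v := xi*yr-xr*yi with hv
  have hAnn : 0 ≤ A := by positivity
  have hBnn : 0 ≤ B := by positivity
  have hAB : u^2+v^2 = A*B := by rw [hA,hB,hu,hv]; ring
  have huv : 0 ≤ u^2+v^2 := by positivity
  have hR2 : (cr*u+ci*v)^2 ≤ p*q*(A*B) := by
    nlinarith [sq_nonneg (cr*v-ci*u), mul_nonneg (by linarith : (0:ℝ) ≤ p*q-(cr*cr+ci*ci)) huv]
  nlinarith [hR2, sq_nonneg (p*A - q*B), mul_nonneg hp hAnn, mul_nonneg hq hBnn, hAB]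

lemma herm_psd (p q : ℝ) (c : ℂ) (hp : 0 ≤ p) (hq : 0 ≤ q)
    (h : ‖c‖ ^ 2 ≤ p * q) :
    (!![(p:ℂ), c; (starRingEnd ℂ) c, (q:ℂ)]).PosSemidef := by
  rw [Matrix.posSemidef_iff_dotProduct_mulVec]
  constructor
  · rw [Matrix.IsHermitian]; ext i j; fin_cases i <;> fin_cases j <;>
      simp [Matrix.conjTranspose_apply]
  · intro x
    rw [Complex.le_def]
    rw [Complex.sq_norm, Complex.normSq_apply] at h
    constructor
    · simp only [dotProduct, Matrix.mulVec, Fin.sum_univ_two, Complex.zero_re]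
      simp [Complex.add_re, Complex.mul_re, Complex.ofReal_re, Complex.ofReal_im]
      nlinarith [quad_aux p q c.re c.im (x 0).re (x 0).im (x 1).re (x 1).im hp hq h]
    · simp [dotProduct, Matrix.mulVec, Fin.sum_univ_two,
        Complex.add_im, Complex.mul_im, Complex.ofReal_re, Complex.ofReal_im]
      ring

lemma value_lemma (a : ℝ) (b : ℂ) (p : ℝ) (c : ℂ) (ρ : Matrix (Fin 2) (Fin 2) ℂ)
    (h00 : ρ 0 0 = (p:ℂ)) (h01 : ρ 0 1 = c) (h10 : ρ 1 0 = (starRingEnd ℂ) c)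
    (h11 : ρ 1 1 = ((1-p:ℝ):ℂ)) :
    variance ρ (!![1, 0; 0, -1]) + variance ρ (!![(a : ℂ), b; (starRingEnd ℂ) b, -(a : ℂ)])
    = a^2 + ‖b‖ ^ 2 + 1 - (2*p-1)^2
      - (a*(2*p-1) + 2*(b.re*c.re + b.im*c.im))^2 := by
  rw [Complex.sq_norm, Complex.normSq_apply]
  unfold variance expval
  simp only [Matrix.trace_fin_two, Matrix.mul_apply, Fin.sum_univ_two, h00, h01, h10, h11]
  simp [Complex.add_re, Complex.mul_re, Complex.ofReal_re, Complex.ofReal_im,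
    Complex.conj_re, Complex.conj_im]
  ring

lemma key_ineq (a B m t L : ℝ) (hB : 0 ≤ B) (hchar : L^2 - (a^2+B+1)*L + B = 0)
    (hL1 : 1+a^2 ≤ L) (hLB : B ≤ L) (hm : m^2 ≤ 1) (hcon : t^2 ≤ B*(1-m^2)) :
    (1+a^2)*m^2 + 2*a*m*t + t^2 ≤ L := by
  rcases eq_or_lt_of_le hLB with hEq | hlt
  · subst hEq
    have haB : a^2*B = 0 := by nlinarith [hchar]
    rcases mul_eq_zero.mp haB with ha | hB0
    · have ha' : a = 0 := by nlinarith [sq_nonneg a]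
      subst ha'
      nlinarith [hm, hcon, sq_nonneg m]
    · exfalso; rw [hB0] at hL1; nlinarith [sq_nonneg a]
  · rcases eq_or_lt_of_le hB with hB0 | hBpos
    · have ht : t = 0 := by nlinarith [sq_nonneg t]
      subst ht
      nlinarith [hL1, hm, sq_nonneg a]
    · have hch' : B*m^2*(L^2-(a^2+B+1)*L+B) = 0 := by rw [hchar]; ring
      have hid : (L-B)*(L*(B*m^2+t^2) - B*((1+a^2)*m^2+2*a*m*t+t^2))
          = (a*B*m - (L-B)*t)^2 + B*m^2*(L^2-(a^2+B+1)*L+B) := by ring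
      have h1 : 0 ≤ L*(B*m^2+t^2) - B*((1+a^2)*m^2+2*a*m*t+t^2) := by
        by_contra hX; push_neg at hX
        nlinarith [hid, hch', sq_nonneg (a*B*m-(L-B)*t),
          mul_pos (sub_pos.2 hlt) (neg_pos.2 hX)]
      have h2 : B*m^2+t^2 ≤ B := by nlinarith
      have hLpos : 0 < L := by nlinarith [sq_nonneg a]
      have h3 : B*((1+a^2)*m^2+2*a*m*t+t^2) ≤ B*L := by
        nlinarith [mul_le_mul_of_nonneg_left h2 hLpos.le]
      exact le_of_mul_le_mul_left h3 hBpos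

lemma L_facts (a B : ℝ) (hB : 0 ≤ B) :
    0 ≤ (a^2+B+1)^2 - 4*B ∧
    (((a^2+B+1) + Real.sqrt ((a^2+B+1)^2 - 4*B))/2)^2
      - (a^2+B+1)*(((a^2+B+1) + Real.sqrt ((a^2+B+1)^2 - 4*B))/2) + B = 0 ∧
    1+a^2 ≤ ((a^2+B+1) + Real.sqrt ((a^2+B+1)^2 - 4*B))/2 ∧
    B ≤ ((a^2+B+1) + Real.sqrt ((a^2+B+1)^2 - 4*B))/2 := by
  have hdisc : 0 ≤ (a^2+B+1)^2 - 4*B := by nlinarith [sq_nonneg a, sq_nonneg (a*a), sq_nonneg (B-1)]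
  set s := Real.sqrt ((a^2+B+1)^2 - 4*B) with hs
  have hs0 : 0 ≤ s := Real.sqrt_nonneg _
  have hs2 : s^2 = (a^2+B+1)^2 - 4*B := Real.sq_sqrt hdisc
  refine ⟨hdisc, by linear_combination hs2/4, ?_, ?_⟩
  · rcases le_or_gt (1+a^2-B) 0 with h | h
    · nlinarith
    · have : 1+a^2-B ≤ s := by
        rw [hs]
        rw [show (1+a^2-B) = Real.sqrt ((1+a^2-B)^2) from (Real.sqrt_sq h.le).symm]
        apply Real.sqrt_le_sqrt
        nlinarith [mul_nonneg (sq_nonneg a) hB]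
      linarith
  · rcases le_or_gt (B-a^2-1) 0 with h | h
    · nlinarith
    · have : B-a^2-1 ≤ s := by
        rw [hs]
        rw [show (B-a^2-1) = Real.sqrt ((B-a^2-1)^2) from (Real.sqrt_sq h.le).symm]
        apply Real.sqrt_le_sqrt
        nlinarith [mul_nonneg (sq_nonneg a) hB]
      linarith

set_option maxHeartbeats 2000000 in
theorem qubit_min_sum_variance (a : ℝ) (b : ℂ) :
    IsLeast {s : ℝ | ∃ ρ : Matrix (Fin 2) (Fin 2) ℂ, IsDensity ρ ∧
        s = variance ρ (!![1, 0; 0, -1] : Matrix (Fin 2) (Fin 2) ℂ) +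
            variance ρ (!![(a : ℂ), b; (starRingEnd ℂ) b, -(a : ℂ)] :
              Matrix (Fin 2) (Fin 2) ℂ)}
      ((1/2) * (a^2 + ‖b‖ ^ 2 + 1 -
        Real.sqrt ((a^2 + ‖b‖ ^ 2 + 1)^2 - 4 * ‖b‖ ^ 2))) := by
  set B := ‖b‖ ^ 2 with hBdef
  have hB : 0 ≤ B := by positivity
  have hbB : b.re*b.re + b.im*b.im = B := by
    rw [hBdef, Complex.sq_norm, Complex.normSq_apply]
  obtain ⟨hdisc, hchar, hL1, hLB⟩ := L_facts a B hB
  set s := Real.sqrt ((a^2+B+1)^2 - 4*B) with hsdef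
  have hs0 : 0 ≤ s := Real.sqrt_nonneg _
  set L := ((a^2+B+1) + s)/2 with hLdef
  have hCL : (1/2) * (a^2 + B + 1 - s) = a^2+B+1 - L := by rw [hLdef]; ring
  have hgoalval : (1/2) * (a^2 + B + 1 - Real.sqrt ((a^2 + B + 1)^2 - 4 * B))
      = a^2+B+1 - L := hCL
  constructor
  · -- membership
    by_cases hcase : a = 0 ∧ 1 ≤ B
    · -- degenerate: a = 0, B ≥ 1
      obtain ⟨ha, hB1⟩ := hcase
      have hsq : s = B - 1 := by
        rw [hsdef, ha, show ((0:ℝ)^2+B+1)^2 - 4*B = (B-1)^2 by ring]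
        exact Real.sqrt_sq (by linarith)
      have hLeqB : L = B := by rw [hLdef, hsq, ha]; ring
      have hBpos : (0:ℝ) < B := by linarith
      obtain ⟨r, hrdef⟩ : ∃ x : ℝ, Real.sqrt B = x := ⟨_, rfl⟩
      have hr0 : 0 < r := hrdef ▸ Real.sqrt_pos.2 hBpos
      have hr2 : r^2 = B := by rw [← hrdef]; exact Real.sq_sqrt hB
      obtain ⟨x, hxdef⟩ : ∃ y : ℝ, y = 1/(2*r) := ⟨_, rfl⟩
      have hx2r : x*(2*r) = 1 := by rw [hxdef]; field_simp
      obtain ⟨c, hcdef⟩ : ∃ z : ℂ, z = ((x:ℝ):ℂ)*b := ⟨_, rfl⟩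
      have hcre : c.re = x*b.re := by rw [hcdef]; simp [Complex.mul_re]
      have hcim : c.im = x*b.im := by rw [hcdef]; simp [Complex.mul_im]
      have hcabs : ‖c‖ ^ 2 = 1/4 := by
        rw [Complex.sq_norm, Complex.normSq_apply, hcre, hcim]
        have e : (x*b.re*(x*b.re) + x*b.im*(x*b.im))*(4*r^2) = (1/4)*(4*r^2) := by
          have e1 : x^2*(b.re*b.re + b.im*b.im) = x^2*B := by rw [hbB]
          have e2 : x^2*B*(4*r^2) = B := by
            have : x^2*(4*r^2) = 1 := by nlinarith [hx2r]
            nlinarith [this]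
          nlinarith [e1, e2, hr2]
        have hr2ne : (4*r^2 : ℝ) ≠ 0 := by positivity
        exact mul_right_cancel₀ hr2ne e
      have ht : 2*(b.re*c.re + b.im*c.im) = r := by
        rw [hcre, hcim]
        have e : (2*(b.re*(x*b.re) + b.im*(x*b.im)))*(2*r) = r*(2*r) := by
          have e1 : 2*x*(b.re*b.re + b.im*b.im) = 2*x*B := by rw [hbB]
          nlinarith [e1, hx2r, hr2]
        exact mul_right_cancel₀ (by positivity) e
      refine ⟨!![((1/2:ℝ):ℂ), c; (starRingEnd ℂ) c, ((1-(1/2:ℝ):ℝ):ℂ)],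
        ⟨herm_psd (1/2) (1-(1/2)) c (by norm_num) (by norm_num)
          (by rw [hcabs]; norm_num), ?_⟩, ?_⟩
      · simp [Matrix.trace_fin_two]
      · rw [value_lemma a b (1/2) c _ rfl rfl rfl rfl, hgoalval, ht, ha, hLeqB]
        norm_num
        linarith [hr2]
    · -- main case
      have hD : 0 < (L-B)^2 + a^2*B := by
        rcases eq_or_ne a 0 with ha | ha
        · have hB1 : B < 1 := by
            by_contra hc; push_neg at hc; exact hcase ⟨ha, hc⟩
          have hlb : 0 < L - B := by linarith [hL1, sq_nonneg a]
          linarith [pow_pos hlb 2, mul_nonneg (sq_nonneg a) hB]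
        · have ha2 : 0 < a^2 := by positivity
          rcases eq_or_lt_of_le hB with hB0 | hBpos
          · have hlb : 0 < L - B := by rw [← hB0]; linarith [hL1]
            linarith [pow_pos hlb 2, mul_nonneg (sq_nonneg a) hB]
          · linarith [mul_pos ha2 hBpos, sq_nonneg (L-B)]
      obtain ⟨d, hddef⟩ : ∃ x : ℝ, Real.sqrt ((L-B)^2 + a^2*B) = x := ⟨_, rfl⟩
      have hd0 : 0 < d := hddef ▸ Real.sqrt_pos.2 hD
      have hd2 : d^2 = (L-B)^2 + a^2*B := by rw [← hddef]; exact Real.sq_sqrt hD.le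
      obtain ⟨m, hmdef⟩ : ∃ x : ℝ, x = (L-B)/d := ⟨_, rfl⟩
      obtain ⟨t, htdef⟩ : ∃ x : ℝ, x = a*B/d := ⟨_, rfl⟩
      have hmd : m*d = L-B := by rw [hmdef]; field_simp
      have htd : t*d = a*B := by rw [htdef]; field_simp
      have emd : m^2*d^2 = (L-B)^2 := by linear_combination (m*d + (L-B))*hmd
      have hm2 : m^2 ≤ 1 := by
        have h1 : m^2*d^2 ≤ 1*d^2 := by
          rw [emd, one_mul, hd2]; linarith [mul_nonneg (sq_nonneg a) hB]
        exact le_of_mul_le_mul_right h1 (by positivity)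
      have h1m : (1 - m^2)*d^2 = a^2*B := by linear_combination hd2 - emd
      obtain ⟨p, hpdef⟩ : ∃ x : ℝ, x = (1+m)/2 := ⟨_, rfl⟩
      have hmbd := abs_le_of_sq_le_sq' (by linarith [hm2] : m^2 ≤ 1^2) one_pos.le
      have hp0 : 0 ≤ p := by rw [hpdef]; linarith [hmbd.1]
      have hq0 : 0 ≤ 1-p := by rw [hpdef]; linarith [hmbd.2]
      have h2p1 : 2*p-1 = m := by rw [hpdef]; ring
      obtain ⟨x, hxdef⟩ : ∃ y : ℝ, y = t/(2*B) := ⟨_, rfl⟩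
      obtain ⟨c, hcdef⟩ : ∃ z : ℂ, z = ((x:ℝ):ℂ)*b := ⟨_, rfl⟩
      have hcre : c.re = x*b.re := by rw [hcdef]; simp [Complex.mul_re]
      have hcim : c.im = x*b.im := by rw [hcdef]; simp [Complex.mul_im]
      have hcabs : ‖c‖ ^ 2 = x^2*B := by
        rw [Complex.sq_norm, Complex.normSq_apply, hcre, hcim]
        linear_combination (x^2)*hbB
      have hpq : p * (1-p) = (1-m^2)/4 := by rw [hpdef]; ring
      have hfinal : m^2 + (a*m+t)^2 = L := by
        have e : (m*d)^2 + (a*(m*d)+t*d)^2 = L*d^2 := by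
          rw [hmd, htd, hd2]
          linear_combination (B-L)*hchar
        have e2 : (m^2+(a*m+t)^2)*d^2 = L*d^2 := by linear_combination e
        exact mul_right_cancel₀ (by positivity) e2
      rcases eq_or_lt_of_le hB with hB0 | hBpos
      · -- B = 0 : b = 0, t = 0
        have habs2 : ‖b‖ ^ 2 = 0 := by rw [← hBdef, ← hB0]
        have hb0 : b = 0 :=
          norm_eq_zero.mp (pow_eq_zero_iff (by norm_num) |>.mp habs2)
        have ht0 : t = 0 := by rw [htdef, ← hB0]; simp
        have hc_pq : ‖c‖ ^ 2 ≤ p * (1-p) := by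
          rw [hcabs, ← hB0, hpq]; linarith [hm2]
        have ht' : 2*(b.re*c.re + b.im*c.im) = t := by
          rw [hcre, hcim, hb0, ht0]; simp
        refine ⟨!![(p:ℂ), c; (starRingEnd ℂ) c, ((1-p:ℝ):ℂ)],
          ⟨herm_psd p (1-p) c hp0 hq0 hc_pq, ?_⟩, ?_⟩
        · simp [Matrix.trace_fin_two]
        · rw [value_lemma a b p c _ rfl rfl rfl rfl, hgoalval, ht', h2p1]
          linarith [hfinal]
      · -- B > 0
        have hx2B : x*(2*B) = t := by rw [hxdef]; field_simp
        have htsq : t^2*d^2 = a^2*B^2 := by linear_combination (t*d + a*B)*htd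
        have ht2 : t^2 = 4*x^2*B^2 := by linear_combination (-(x*(2*B))-t)*hx2B
        have h4x : 4*x^2*d^2 = a^2 := by
          have e : (4*x^2*d^2)*B^2 = a^2*B^2 := by
            linear_combination htsq - d^2*ht2
          exact mul_right_cancel₀ (by positivity) e
        have hc_pq : ‖c‖ ^ 2 ≤ p * (1-p) := by
          rw [hcabs, hpq]
          have e : (x^2*B)*(4*d^2) = ((1-m^2)/4)*(4*d^2) := by
            linear_combination B*h4x - h1m
          have e2 := mul_right_cancel₀ (by positivity : (4*d^2:ℝ) ≠ 0) e
          linarith [e2]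
        have ht' : 2*(b.re*c.re + b.im*c.im) = t := by
          rw [hcre, hcim]
          have e : (2*(b.re*(x*b.re) + b.im*(x*b.im))) = 2*x*B := by
            linear_combination (2*x)*hbB
          rw [e]; linarith [hx2B]
        refine ⟨!![(p:ℂ), c; (starRingEnd ℂ) c, ((1-p:ℝ):ℂ)],
          ⟨herm_psd p (1-p) c hp0 hq0 hc_pq, ?_⟩, ?_⟩
        · simp [Matrix.trace_fin_two]
        · rw [value_lemma a b p c _ rfl rfl rfl rfl, hgoalval, ht', h2p1]
          linarith [hfinal]
  · -- lower bound
    rintro x ⟨ρ, ⟨hpsd, htr⟩, rfl⟩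
    have hH := hpsd.1
    obtain ⟨p, hpdef⟩ : ∃ x : ℝ, (ρ 0 0).re = x := ⟨_, rfl⟩
    obtain ⟨c, hcdef⟩ : ∃ z : ℂ, ρ 0 1 = z := ⟨_, rfl⟩
    have h00im : (ρ 0 0).im = 0 := by
      have h := congrFun (congrFun hH 0) 0
      simp [Matrix.conjTranspose_apply, Complex.ext_iff] at h
      linarith [h]
    have h11im : (ρ 1 1).im = 0 := by
      have h := congrFun (congrFun hH 1) 1
      simp [Matrix.conjTranspose_apply, Complex.ext_iff] at h
      linarith [h]
    have h10 : ρ 1 0 = (starRingEnd ℂ) c := by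
      have h := congrFun (congrFun hH 1) 0
      rw [← hcdef]
      simpa [Matrix.conjTranspose_apply] using h.symm
    have h00 : ρ 0 0 = (p:ℂ) := by
      apply Complex.ext <;> simp [h00im, hpdef]
    have htrre : p + (ρ 1 1).re = 1 := by
      have := congrArg Complex.re htr
      simp [Matrix.trace_fin_two] at this
      rw [← hpdef]; linarith
    have h11 : ρ 1 1 = ((1-p:ℝ):ℂ) := by
      apply Complex.ext <;> simp [h11im]; linarith
    have hp0 : 0 ≤ p := by
      have := hpsd.re_dotProduct_nonneg (Pi.single 0 1)
      simpa [dotProduct, Matrix.mulVec, Fin.sum_univ_two, Pi.single_apply, hpdef] using this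
    have hq0 : 0 ≤ 1 - p := by
      have := hpsd.re_dotProduct_nonneg (Pi.single 1 1)
      simp [dotProduct, Matrix.mulVec, Fin.sum_univ_two, Pi.single_apply, h11] at this
      linarith
    have hdet : ‖c‖ ^ 2 ≤ p * (1-p) := by
      have h1 := hpsd.re_dotProduct_nonneg ![c, (-p:ℝ)]
      have h2 := hpsd.re_dotProduct_nonneg ![((-(1-p):ℝ):ℂ), (starRingEnd ℂ) c]
      simp only [dotProduct, Matrix.mulVec, Fin.sum_univ_two, Matrix.cons_val_zero,
        Matrix.cons_val_one, Matrix.head_cons, h00, h10, h11, hcdef, Pi.star_apply,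
        RCLike.star_def] at h1 h2
      rw [Complex.sq_norm, Complex.normSq_apply]
      simp only [RCLike.re_to_complex, Complex.add_re, Complex.mul_re, Complex.ofReal_re,
        Complex.ofReal_im, Complex.conj_re, Complex.conj_im, Complex.neg_re, Complex.neg_im,
        Complex.add_im, Complex.mul_im] at h1 h2
      nlinarith [h1, h2]
    rw [value_lemma a b p c ρ h00 hcdef h10 h11, hgoalval]
    have hm2 : (2*p-1)^2 ≤ 1 := by nlinarith
    have hcs : (2*(b.re*c.re + b.im*c.im))^2 ≤ B*(1-(2*p-1)^2) := by
      have habs : c.re*c.re + c.im*c.im ≤ p*(1-p) := by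
        rw [Complex.sq_norm, Complex.normSq_apply] at hdet; linarith
      have e1 : (b.re*c.re + b.im*c.im)^2 ≤ B * (c.re*c.re+c.im*c.im) := by
        rw [← hbB]; nlinarith [sq_nonneg (b.re*c.im - b.im*c.re)]
      have e2 : B*(c.re*c.re+c.im*c.im) ≤ B*(p*(1-p)) := mul_le_mul_of_nonneg_left habs hB
      nlinarith [e1, e2]
    have hkey := key_ineq a B (2*p-1) (2*(b.re*c.re + b.im*c.im)) L hB hchar hL1 hLB hm2 hcs
    nlinarith [hkey]
end
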